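/- arXiv:adap-org/9810006 — 2 statements merged into one kernel-verified Lean document; each statement's English description precedes it below -/
import Mathlib

section
/- The propagation rule P is a cellular automaton rule of radius 2n − 1: there exists a local rule f : (Fin n)^{2(2n−1)+1} → Fin n such that for every chain length N and every configuration α on N sites, P(α)(j) = f(α(j−(2n−1)), …, α(j+(2n−1))), indices taken mod N. -/
namespace DensityCA

/-- A configuration on `N` sites with `n` states: a one-dimensional chain
with periodic boundary conditions. -/
abbrev Config (n N : ℕ) := ZMod N → Fin n

/-- The CA map on `N`-site configurations induced by a local rule `f` of radius `r`:
`T_N(α)(j) = f(α(j−r), …, α(j+r))`, indices taken mod `N`. -/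
def caStep (n r : ℕ) (f : (Fin (2*r+1) → Fin n) → Fin n) (N : ℕ)
    (α : Config n N) : Config n N :=
  fun j => f (fun k => α (j + ((k : ℕ) : ZMod N) - ((r : ℕ) : ZMod N)))

/-- The constant configuration with every site in state `i`. -/
def constConfig (n N : ℕ) (i : Fin n) : Config n N := fun _ => i

/-- `c_i(α)`: the number of sites of `α` in state `i`. -/
def countState {n N : ℕ} (i : Fin n) (α : Config n N) : ℕ :=
  ((List.range N).filter (fun j => decide (α (j : ZMod N) = i))).length

/-- `α ∈ Ω_i`: state `i` occurs strictly more often than any other state. -/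
def InOmega {n N : ℕ} (i : Fin n) (α : Config n N) : Prop :=
  ∀ j : Fin n, j ≠ i → countState j α < countState i α

/-- The CA rule induced by `f` classifies `n`-ary density. -/
def Classifies (n r : ℕ) (f : (Fin (2*r+1) → Fin n) → Fin n) : Prop :=
  ∀ (N : ℕ), 1 ≤ N → ∀ (i : Fin n) (α : Config n N),
    InOmega i α → ∃ k : ℕ, (caStep n r f N)^[k] α = constConfig n N i

/-! Elementary blocks -/

/-- `p` is a break (descent) position: the EB containing `p` ends at `p`. -/
def isBreak {n N : ℕ} (α : Config n N) (p : ZMod N) : Prop := α (p + 1) ≤ α p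

/-- The list of break positions `j ∈ {0,…,N−1}` (as natural numbers). -/
def breakList {n N : ℕ} (α : Config n N) : List ℕ :=
  (List.range N).filter (fun j => decide (α ((j : ZMod N) + 1) ≤ α (j : ZMod N)))

/-- The total number of EBs of a configuration. -/
def numEBs {n N : ℕ} (α : Config n N) : ℕ := (breakList α).length

/-- Distance (number of forward steps) from `p` to the end of the EB containing `p`. -/
def blockEndIdx {n N : ℕ} (α : Config n N) (p : ZMod N) : ℕ :=
  ((List.range N).find? (fun (k : ℕ) =>
    decide (α (p + (k : ZMod N) + 1) ≤ α (p + (k : ZMod N))))).getD 0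

/-- Distance (number of backward steps) from `p` to the start of the EB containing `p`. -/
def blockStartIdx {n N : ℕ} (α : Config n N) (p : ZMod N) : ℕ :=
  ((List.range N).find? (fun (k : ℕ) =>
    decide (α (p - (k : ZMod N)) ≤ α (p - (k : ZMod N) - 1)))).getD 0

/-- The last site of the EB containing `p`. -/
def blockEnd {n N : ℕ} (α : Config n N) (p : ZMod N) : ZMod N :=
  p + ((blockEndIdx α p : ℕ) : ZMod N)

/-- The first site of the EB containing `p`. -/
def blockStart {n N : ℕ} (α : Config n N) (p : ZMod N) : ZMod N :=
  p - ((blockStartIdx α p : ℕ) : ZMod N)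

/-- The length of the EB containing `p`. -/
def blockLen {n N : ℕ} (α : Config n N) (p : ZMod N) : ℕ :=
  blockStartIdx α p + blockEndIdx α p + 1

/-- The (strictly increasing) sequence of states of the EB containing `p`. -/
def blockList {n N : ℕ} (α : Config n N) (p : ZMod N) : List (Fin n) :=
  (List.range (blockLen α p)).map (fun t => α (blockStart α p + (t : ZMod N)))

/-- The EB containing `p`, identified with its set of states. -/
def blockSet {n N : ℕ} (α : Config n N) (p : ZMod N) : Finset (Fin n) :=
  (blockList α p).toFinset

/-- The set of sites of the EB containing `p`. -/
def blockSites {n N : ℕ} (α : Config n N) (p : ZMod N) : Finset (ZMod N) :=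
  ((List.range (blockLen α p)).map (fun t => blockStart α p + (t : ZMod N))).toFinset

/-- `S` is a cyclic run of consecutive sites on which `α` is strictly increasing. -/
def IsIncRun {n N : ℕ} (α : Config n N) (S : Finset (ZMod N)) : Prop :=
  ∃ (p : ZMod N) (m : ℕ), 1 ≤ m ∧ m ≤ N ∧
    S = ((List.range m).map (fun t => p + (t : ZMod N))).toFinset ∧
    ∀ t : ℕ, t + 1 < m → α (p + (t : ZMod N)) < α (p + (t : ZMod N) + 1)

/-- `S` is a maximal strictly increasing cyclic run of sites. -/
def IsMaxIncRun {n N : ℕ} (α : Config n N) (S : Finset (ZMod N)) : Prop :=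
  IsIncRun α S ∧ ∀ S' : Finset (ZMod N), IsIncRun α S' → S ⊆ S' → S' = S

/-! The hlex order and interactions of EBs (identified with nonempty subsets of `Fin n`). -/

/-- The strictly increasing list of the states of an EB. -/
def sortedList {n : ℕ} (S : Finset (Fin n)) : List (Fin n) := S.sort (· ≤ ·)

/-- Lexicographic comparison of lists of states. -/
def lexLT {n : ℕ} : List (Fin n) → List (Fin n) → Bool
  | [], [] => false
  | [], _ :: _ => true
  | _ :: _, [] => false
  | a :: as, b :: bs => if a < b then true else if b < a then false else lexLT as bs

/-- hlex: first compare lengths, then compare the increasing state sequences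
lexicographically (i.e. at the first index where they differ). -/
def hlexLTb {n : ℕ} (S T : Finset (Fin n)) : Bool :=
  decide (S.card < T.card) ||
    (decide (S.card = T.card) && lexLT (sortedList S) (sortedList T))

def hlexLEb {n : ℕ} (S T : Finset (Fin n)) : Bool := hlexLTb S T || decide (S = T)

def HlexLE {n : ℕ} (S T : Finset (Fin n)) : Prop := hlexLEb S T = true

/-- Two adjacent EBs `C₁C₂` interact elastically if the greedy interaction
`I(C₁C₂) = D₁D₂` (with `D₁ = C₁ ∪ C₂`, `D₂ = C₁ ∩ C₂`) equals `C₁C₂` or `C₂C₁`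
as sequences of states. -/
def Elastic {n : ℕ} (C1 C2 : Finset (Fin n)) : Prop :=
  sortedList (C1 ∪ C2) ++ sortedList (C1 ∩ C2) = sortedList C1 ++ sortedList C2 ∨
  sortedList (C1 ∪ C2) ++ sortedList (C1 ∩ C2) = sortedList C2 ++ sortedList C1

/-- The `2^n − 1` possible EBs `B_0 <hlex B_1 <hlex ⋯ <hlex B_{2^n−2}`,
listed in increasing hlex order. -/
def allEBs (n : ℕ) : List (Finset (Fin n)) :=
  ((((List.finRange n).sublists.filter (fun l => !l.isEmpty)).map
      (fun l => l.toFinset)).mergeSort (fun S T => hlexLEb S T))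

/-- `B_i`, the `i`-th EB in hlex order. -/
def Bblock (n : ℕ) (i : ℕ) : Finset (Fin n) := (allEBs n).getD i ∅

/-- The greedy interaction `I(C₁C₂) = D₁D₂` on state sequences:
`D₁` is the increasing sequence of `C₁ ∪ C₂`, `D₂` that of `C₁ ∩ C₂`. -/
def interact {n : ℕ} (L1 L2 : List (Fin n)) : List (Fin n) :=
  ((L1 ++ L2).dedup.mergeSort (fun a b => decide (a ≤ b))) ++
    (L1.filter (fun a => decide (a ∈ L2)))

/-- The basic rule `R_i`: every EB equal to `B_i` undergoes the greedy interaction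
with its forward neighbouring EB (provided the latter is not `B_i`), all such
interactions taken in parallel; expressed sitewise. -/
def Rrule {n N : ℕ} (i : ℕ) (α : Config n N) : Config n N := fun p =>
  let Bi := sortedList (Bblock n i)
  let Lk := blockList α p                                -- the EB containing p
  let Lp := blockList α (blockStart α p - 1)             -- the previous EB
  let Ln := blockList α (blockEnd α p + 1)               -- the next EB
  let t := blockStartIdx α p                             -- offset of p in its EB
  if Lk = Bi then
    if Ln = Bi then α p else (interact Lk Ln).getD t (α p)
  else if Lp = Bi then (interact Lp Lk).getD (Lp.length + t) (α p)
  else α p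

/-- `R_0 ∘ R_1 ∘ ⋯ ∘ R_m`. -/
def chainRule {n N : ℕ} (m : ℕ) (α : Config n N) : Config n N :=
  (List.range (m+1)).foldr (fun i β => Rrule i β) α

/-- The affinity rule `A = R_0 ∘ (R_0∘R_1) ∘ (R_0∘R_1∘R_2) ∘ ⋯ ∘ (R_0∘⋯∘R_{2^n−2})`. -/
def Arule {n N : ℕ} (α : Config n N) : Config n N :=
  (List.range (2^n - 1)).foldr (fun m β => chainRule m β) α

/-- The propagation rule `P`: for consecutive EBs `C₁C₂C₃`, the sites of `C₂` are
unchanged unless one of `C₁, C₂, C₃` is a singleton EB `B_i` (`0 ≤ i < n`), in which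
case every site of `C₂` is set to the state of the hlex-least EB among `C₁, C₂, C₃`. -/
def Prule {n N : ℕ} (α : Config n N) : Config n N := fun p =>
  let S1 := blockSet α (blockStart α p - 1)
  let S2 := blockSet α p
  let S3 := blockSet α (blockEnd α p + 1)
  if S1.card = 1 ∨ S2.card = 1 ∨ S3.card = 1 then
    let m12 := if hlexLEb S1 S2 then S1 else S2
    let m := if hlexLEb m12 S3 then m12 else S3
    (sortedList m).headD (α p)
  else α p


/-! ### Auxiliary development for Statement 12 -/

section LocalRule

/-- local version of `blockStartIdx`, computed from a window on `ℤ`. -/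
def locStart (n : ℕ) (g : ℤ → Fin n) (q : ℤ) : ℕ :=
  (((List.range (n-1)).find? (fun (k : ℕ) =>
    decide (g (q - (k:ℤ)) ≤ g (q - (k:ℤ) - 1)))).getD (n-1))

/-- local version of `blockEndIdx`, computed from a window on `ℤ`. -/
def locEnd (n : ℕ) (g : ℤ → Fin n) (q : ℤ) : ℕ :=
  (((List.range (n-1)).find? (fun (k : ℕ) =>
    decide (g (q + (k:ℤ) + 1) ≤ g (q + (k:ℤ))))).getD (n-1))

/-- local version of `Prule`, computed from a window on `ℤ`. -/
def locPrule (n : ℕ) (g : ℤ → Fin n) : Fin n :=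
  let s := locStart n g 0
  let e := locEnd n g 0
  let s' := locStart n g (-(s:ℤ)-1)
  let e' := locEnd n g ((e:ℤ)+1)
  let S1 := ((List.range (s'+1)).map (fun (t : ℕ) => g (-(s:ℤ)-1-(s':ℤ)+(t:ℤ)))).toFinset
  let S2 := ((List.range (s+e+1)).map (fun (t : ℕ) => g (-(s:ℤ)+(t:ℤ)))).toFinset
  let S3 := ((List.range (e'+1)).map (fun (t : ℕ) => g ((e:ℤ)+1+(t:ℤ)))).toFinset
  if S1.card = 1 ∨ S2.card = 1 ∨ S3.card = 1 then
    let m12 := if hlexLEb S1 S2 then S1 else S2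
    let m := if hlexLEb m12 S3 then m12 else S3
    (sortedList m).headD (g 0)
  else g 0

lemma find?_congr' (l : List ℕ) (b1 b2 : ℕ → Bool) (h : ∀ x ∈ l, b1 x = b2 x) :
    l.find? b1 = l.find? b2 := by
  induction l with
  | nil => rfl
  | cons a l ih =>
    simp only [List.find?]
    rw [h a (by simp)]
    cases hb : b2 a with
    | true => rfl
    | false => exact ih (fun x hx => h x (by simp [hx]))

lemma find?_range_eq_some {b : ℕ → Bool} {m k : ℕ} (hk : k < m) (hb : b k = true)
    (hmin : ∀ j, j < k → b j = false) : (List.range m).find? b = some k := by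
  induction m with
  | zero => omega
  | succ m ih =>
    rw [List.range_succ, List.find?_append]
    rcases Nat.lt_or_ge k m with h | h
    · rw [ih h]; rfl
    · have hk' : k = m := by omega
      subst hk'
      have hnone : (List.range k).find? b = none := by
        rw [List.find?_eq_none]
        intro x hx
        simp [hmin x (List.mem_range.mp hx)]
      rw [hnone]
      simp [hb]

lemma flatMap_single {β γ : Type*} (f : β → γ) (l : List β) :
    l.flatMap (fun a => [f a]) = l.map f := by
  induction l with
  | nil => rfl
  | cons a l ih => simp [ih]

lemma blockList_eq {n N : ℕ} (α : Config n N) (q : ZMod N) :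
    blockList α q = (List.range (blockLen α q)).map
      (fun t : ℕ => α (blockStart α q + (t : ZMod N))) := by
  unfold blockList
  simp only [List.pure_def, List.bind_eq_flatMap, List.map_flatMap]
  exact flatMap_single _ _

lemma desc_val {n N : ℕ} (α : Config n N) (P : ZMod N) (k : ℕ)
    (h : ∀ j : ℕ, j < k → ¬ (α (P - (j:ZMod N)) ≤ α (P - (j:ZMod N) - 1))) :
    (α (P - (k:ZMod N)) : ℕ) + k ≤ (α P : ℕ) := by
  induction k with
  | zero => simp
  | succ k ih =>
    have h2 : α (P - (k:ZMod N) - 1) < α (P - (k:ZMod N)) := lt_of_not_ge (h k (by omega))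
    have ih' := ih (fun j hj => h j (by omega))
    have e1 : ((k+1 : ℕ) : ZMod N) = (k : ZMod N) + 1 := by push_cast; ring
    have e2 : P - ((k:ZMod N) + 1) = P - (k:ZMod N) - 1 := by ring
    rw [e1, e2]
    have := Fin.lt_iff_val_lt_val.mp h2
    omega

lemma asc_val {n N : ℕ} (α : Config n N) (P : ZMod N) (k : ℕ)
    (h : ∀ j : ℕ, j < k → ¬ (α (P + (j:ZMod N) + 1) ≤ α (P + (j:ZMod N)))) :
    (α P : ℕ) + k ≤ (α (P + (k:ZMod N)) : ℕ) := by
  induction k with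
  | zero => simp
  | succ k ih =>
    have h2 : α (P + (k:ZMod N)) < α (P + (k:ZMod N) + 1) := lt_of_not_ge (h k (by omega))
    have ih' := ih (fun j hj => h j (by omega))
    have e1 : ((k+1 : ℕ) : ZMod N) = (k : ZMod N) + 1 := by push_cast; ring
    have e2 : P + ((k:ZMod N) + 1) = P + (k:ZMod N) + 1 := by ring
    rw [e1, e2]
    have := Fin.lt_iff_val_lt_val.mp h2
    omega

lemma exists_break_S {n N : ℕ} (hN : 1 ≤ N) (α : Config n N) (P : ZMod N) :
    ∃ k : ℕ, (α (P - (k:ZMod N)) ≤ α (P - (k:ZMod N) - 1)) ∧ k < N := by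
  by_contra h
  push_neg at h
  have h' : ∀ j, j < N → ¬ (α (P - (j:ZMod N)) ≤ α (P - (j:ZMod N) - 1)) := by
    intro j hj hc
    exact absurd (h j hc) (by omega)
  have := desc_val α P N h'
  rw [ZMod.natCast_self, sub_zero] at this
  omega

lemma exists_break_E {n N : ℕ} (hN : 1 ≤ N) (α : Config n N) (P : ZMod N) :
    ∃ k : ℕ, (α (P + (k:ZMod N) + 1) ≤ α (P + (k:ZMod N))) ∧ k < N := by
  by_contra h
  push_neg at h
  have h' : ∀ j, j < N → ¬ (α (P + (j:ZMod N) + 1) ≤ α (P + (j:ZMod N))) := by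
    intro j hj hc
    exact absurd (h j hc) (by omega)
  have := asc_val α P N h'
  rw [ZMod.natCast_self, add_zero] at this
  omega

lemma start_key {n N : ℕ} (hn : 2 ≤ n) (hN : 1 ≤ N) (α : Config n N) (P : ZMod N) :
    (α (P - (blockStartIdx α P : ZMod N)) ≤ α (P - (blockStartIdx α P : ZMod N) - 1)) ∧
    blockStartIdx α P =
      (((List.range (n-1)).find? (fun (k : ℕ) =>
        decide (α (P - (k:ZMod N)) ≤ α (P - (k:ZMod N) - 1)))).getD (n-1)) := by
  set b : ℕ → Bool := fun k => decide (α (P - (k:ZMod N)) ≤ α (P - (k:ZMod N) - 1)) with hbdef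
  obtain ⟨k1, hk1, hk1N⟩ := exists_break_S hN α P
  have hex : ∃ k, b k = true := ⟨k1, by simp [hbdef, hk1]⟩
  set k0 := Nat.find hex with hk0def
  have hb0 : b k0 = true := Nat.find_spec hex
  have hmin : ∀ j, j < k0 → b j = false := by
    intro j hj
    have := Nat.find_min hex hj
    simpa using this
  have hk0N : k0 < N := lt_of_le_of_lt (Nat.find_min' hex (by simp [hbdef, hk1])) hk1N
  have hk0n : k0 ≤ n - 1 := by
    by_contra hgt
    push_neg at hgt
    have hforce : b (n-1) = true := by
      have hno : ∀ j, j < n - 1 → ¬ (α (P - (j:ZMod N)) ≤ α (P - (j:ZMod N) - 1)) := by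
        intro j hj hc
        have := hmin j (by omega)
        simp [hbdef, hc] at this
      have hd := desc_val α P (n-1) hno
      have hlt : (α P : ℕ) < n := (α P).isLt
      have hz : (α (P - ((n-1:ℕ):ZMod N)) : ℕ) = 0 := by omega
      simp only [hbdef, decide_eq_true_eq]
      rw [Fin.le_def, hz]
      exact Nat.zero_le _
    exact absurd (Nat.find_min' hex hforce) (by omega)
  have hglob : blockStartIdx α P = k0 := by
    unfold blockStartIdx
    rw [find?_range_eq_some hk0N hb0 hmin]
    rfl
  constructor
  · rw [hglob]
    have := hb0
    simpa [hbdef] using this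
  · rcases Nat.lt_or_ge k0 (n-1) with h | h
    · rw [hglob, find?_range_eq_some h hb0 hmin]
      rfl
    · have hk0eq : k0 = n - 1 := by omega
      have hnone : (List.range (n-1)).find? b = none := by
        rw [List.find?_eq_none]
        intro x hx
        have := hmin x (by rw [hk0eq]; exact List.mem_range.mp hx)
        simp [this]
      rw [hglob, hnone, hk0eq]
      rfl

lemma end_key {n N : ℕ} (hn : 2 ≤ n) (hN : 1 ≤ N) (α : Config n N) (P : ZMod N) :
    (α (P + (blockEndIdx α P : ZMod N) + 1) ≤ α (P + (blockEndIdx α P : ZMod N))) ∧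
    blockEndIdx α P =
      (((List.range (n-1)).find? (fun (k : ℕ) =>
        decide (α (P + (k:ZMod N) + 1) ≤ α (P + (k:ZMod N))))).getD (n-1)) := by
  set b : ℕ → Bool := fun k => decide (α (P + (k:ZMod N) + 1) ≤ α (P + (k:ZMod N))) with hbdef
  obtain ⟨k1, hk1, hk1N⟩ := exists_break_E hN α P
  have hex : ∃ k, b k = true := ⟨k1, by simp [hbdef, hk1]⟩
  set k0 := Nat.find hex with hk0def
  have hb0 : b k0 = true := Nat.find_spec hex
  have hmin : ∀ j, j < k0 → b j = false := by
    intro j hj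
    have := Nat.find_min hex hj
    simpa using this
  have hk0N : k0 < N := lt_of_le_of_lt (Nat.find_min' hex (by simp [hbdef, hk1])) hk1N
  have hk0n : k0 ≤ n - 1 := by
    by_contra hgt
    push_neg at hgt
    have hforce : b (n-1) = true := by
      have hno : ∀ j, j < n - 1 → ¬ (α (P + (j:ZMod N) + 1) ≤ α (P + (j:ZMod N))) := by
        intro j hj hc
        have := hmin j (by omega)
        simp [hbdef, hc] at this
      have hd := asc_val α P (n-1) hno
      have hlt1 : (α (P + ((n-1:ℕ):ZMod N)) : ℕ) < n := (α _).isLt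
      have hlt2 : (α (P + ((n-1:ℕ):ZMod N) + 1) : ℕ) < n := (α _).isLt
      simp only [hbdef, decide_eq_true_eq]
      rw [Fin.le_def]
      omega
    exact absurd (Nat.find_min' hex hforce) (by omega)
  have hglob : blockEndIdx α P = k0 := by
    unfold blockEndIdx
    rw [find?_range_eq_some hk0N hb0 hmin]
    rfl
  constructor
  · rw [hglob]
    have := hb0
    simpa [hbdef] using this
  · rcases Nat.lt_or_ge k0 (n-1) with h | h
    · rw [hglob, find?_range_eq_some h hb0 hmin]
      rfl
    · have hk0eq : k0 = n - 1 := by omega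
      have hnone : (List.range (n-1)).find? b = none := by
        rw [List.find?_eq_none]
        intro x hx
        have := hmin x (by rw [hk0eq]; exact List.mem_range.mp hx)
        simp [this]
      rw [hglob, hnone, hk0eq]
      rfl

lemma blockEndIdx_eq_zero {n N : ℕ} (hN : 1 ≤ N) (α : Config n N) (P : ZMod N)
    (h : α (P + 1) ≤ α P) : blockEndIdx α P = 0 := by
  unfold blockEndIdx
  rw [find?_range_eq_some hN (by simpa using h) (by omega)]
  rfl

lemma blockStartIdx_eq_zero {n N : ℕ} (hN : 1 ≤ N) (α : Config n N) (P : ZMod N)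
    (h : α P ≤ α (P - 1)) : blockStartIdx α P = 0 := by
  unfold blockStartIdx
  rw [find?_range_eq_some hN (by simpa using h) (by omega)]
  rfl

lemma locStart_eq {n N : ℕ} (hn : 2 ≤ n) (hN : 1 ≤ N) (α : Config n N) (p : ZMod N) (q : ℤ) :
    locStart n (fun m => α (p + (m : ZMod N))) q = blockStartIdx α (p + (q : ZMod N)) := by
  have hpred : (fun (k : ℕ) => decide ((fun m : ℤ => α (p + (m : ZMod N))) (q - (k:ℤ)) ≤
      (fun m : ℤ => α (p + (m : ZMod N))) (q - (k:ℤ) - 1))) =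
      (fun (k : ℕ) => decide (α ((p + (q:ZMod N)) - (k:ZMod N)) ≤
        α ((p + (q:ZMod N)) - (k:ZMod N) - 1))) := by
    funext k
    have e1 : p + (((q - (k:ℕ) : ℤ)) : ZMod N) = (p + (q:ZMod N)) - ((k:ℕ):ZMod N) := by
      push_cast
      ring
    have e2 : p + (((q - (k:ℕ) - 1 : ℤ)) : ZMod N) = (p + (q:ZMod N)) - ((k:ℕ):ZMod N) - 1 := by
      push_cast
      ring
    simp only [e1, e2]
  unfold locStart
  rw [hpred]
  exact (start_key hn hN α (p + (q:ZMod N))).2.symm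

lemma locEnd_eq {n N : ℕ} (hn : 2 ≤ n) (hN : 1 ≤ N) (α : Config n N) (p : ZMod N) (q : ℤ) :
    locEnd n (fun m => α (p + (m : ZMod N))) q = blockEndIdx α (p + (q : ZMod N)) := by
  have hpred : (fun (k : ℕ) => decide ((fun m : ℤ => α (p + (m : ZMod N))) (q + (k:ℤ) + 1) ≤
      (fun m : ℤ => α (p + (m : ZMod N))) (q + (k:ℤ)))) =
      (fun (k : ℕ) => decide (α ((p + (q:ZMod N)) + (k:ZMod N) + 1) ≤
        α ((p + (q:ZMod N)) + (k:ZMod N)))) := by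
    funext k
    have e1 : p + (((q + (k:ℕ) + 1 : ℤ)) : ZMod N) = (p + (q:ZMod N)) + ((k:ℕ):ZMod N) + 1 := by
      push_cast
      ring
    have e2 : p + (((q + (k:ℕ) : ℤ)) : ZMod N) = (p + (q:ZMod N)) + ((k:ℕ):ZMod N) := by
      push_cast
      ring
    simp only [e1, e2]
  unfold locEnd
  rw [hpred]
  exact (end_key hn hN α (p + (q:ZMod N))).2.symm

lemma locStart_le {n : ℕ} (g : ℤ → Fin n) (q : ℤ) : locStart n g q ≤ n - 1 := by
  unfold locStart
  cases hf : (List.range (n-1)).find? (fun (k : ℕ) =>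
      decide (g (q - (k:ℤ)) ≤ g (q - (k:ℤ) - 1))) with
  | none => simp
  | some k =>
    have := List.mem_range.mp (List.mem_of_find?_eq_some hf)
    simp only [Option.getD_some]
    omega

lemma locEnd_le {n : ℕ} (g : ℤ → Fin n) (q : ℤ) : locEnd n g q ≤ n - 1 := by
  unfold locEnd
  cases hf : (List.range (n-1)).find? (fun (k : ℕ) =>
      decide (g (q + (k:ℤ) + 1) ≤ g (q + (k:ℤ)))) with
  | none => simp
  | some k =>
    have := List.mem_range.mp (List.mem_of_find?_eq_some hf)
    simp only [Option.getD_some]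
    omega

lemma locStart_congr {n : ℕ} (g1 g2 : ℤ → Fin n) (q : ℤ)
    (h : ∀ m : ℤ, q - (n:ℤ) + 1 ≤ m → m ≤ q → g1 m = g2 m) :
    locStart n g1 q = locStart n g2 q := by
  unfold locStart
  congr 1
  apply find?_congr'
  intro k hk
  have hkn : k < n - 1 := List.mem_range.mp hk
  rw [h (q - (k:ℤ)) (by omega) (by omega), h (q - (k:ℤ) - 1) (by omega) (by omega)]

lemma locEnd_congr {n : ℕ} (g1 g2 : ℤ → Fin n) (q : ℤ)
    (h : ∀ m : ℤ, q ≤ m → m ≤ q + (n:ℤ) - 1 → g1 m = g2 m) :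
    locEnd n g1 q = locEnd n g2 q := by
  unfold locEnd
  congr 1
  apply find?_congr'
  intro k hk
  have hkn : k < n - 1 := List.mem_range.mp hk
  rw [h (q + (k:ℤ) + 1) (by omega) (by omega), h (q + (k:ℤ)) (by omega) (by omega)]

lemma locPrule_congr {n : ℕ} (hn : 2 ≤ n) (g1 g2 : ℤ → Fin n)
    (h : ∀ m : ℤ, -(2*(n:ℤ) - 1) ≤ m → m ≤ 2*(n:ℤ) - 1 → g1 m = g2 m) :
    locPrule n g1 = locPrule n g2 := by
  have hs : locStart n g1 0 = locStart n g2 0 :=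
    locStart_congr _ _ _ (fun m h1 h2 => h m (by omega) (by omega))
  have he : locEnd n g1 0 = locEnd n g2 0 :=
    locEnd_congr _ _ _ (fun m h1 h2 => h m (by omega) (by omega))
  set s := locStart n g2 0 with hsdef
  set e := locEnd n g2 0 with hedef
  have hsb : s ≤ n - 1 := locStart_le g2 0
  have heb : e ≤ n - 1 := locEnd_le g2 0
  have hs' : locStart n g1 (-(s:ℤ)-1) = locStart n g2 (-(s:ℤ)-1) :=
    locStart_congr _ _ _ (fun m h1 h2 => h m (by omega) (by omega))
  have he' : locEnd n g1 ((e:ℤ)+1) = locEnd n g2 ((e:ℤ)+1) :=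
    locEnd_congr _ _ _ (fun m h1 h2 => h m (by omega) (by omega))
  set s' := locStart n g2 (-(s:ℤ)-1) with hs'def
  set e' := locEnd n g2 ((e:ℤ)+1) with he'def
  have hs'b : s' ≤ n - 1 := locStart_le g2 _
  have he'b : e' ≤ n - 1 := locEnd_le g2 _
  have hL1 : (List.range (s'+1)).map (fun (t : ℕ) => g1 (-(s:ℤ)-1-(s':ℤ)+(t:ℤ))) =
      (List.range (s'+1)).map (fun (t : ℕ) => g2 (-(s:ℤ)-1-(s':ℤ)+(t:ℤ))) := by
    apply List.map_congr_left
    intro t ht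
    have htb : t < s' + 1 := List.mem_range.mp ht
    exact h _ (by omega) (by omega)
  have hL2 : (List.range (s+e+1)).map (fun (t : ℕ) => g1 (-(s:ℤ)+(t:ℤ))) =
      (List.range (s+e+1)).map (fun (t : ℕ) => g2 (-(s:ℤ)+(t:ℤ))) := by
    apply List.map_congr_left
    intro t ht
    have htb : t < s + e + 1 := List.mem_range.mp ht
    exact h _ (by omega) (by omega)
  have hL3 : (List.range (e'+1)).map (fun (t : ℕ) => g1 ((e:ℤ)+1+(t:ℤ))) =
      (List.range (e'+1)).map (fun (t : ℕ) => g2 ((e:ℤ)+1+(t:ℤ))) := by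
    apply List.map_congr_left
    intro t ht
    have htb : t < e' + 1 := List.mem_range.mp ht
    exact h _ (by omega) (by omega)
  have hg0 : g1 0 = g2 0 := h 0 (by omega) (by omega)
  simp only [locPrule]
  rw [hs, he, hs', he', hL1, hL2, hL3, hg0]

lemma locPrule_eq_Prule {n N : ℕ} (hn : 2 ≤ n) (hN : 1 ≤ N) (α : Config n N) (p : ZMod N) :
    locPrule n (fun m => α (p + (m : ZMod N))) = Prule α p := by
  have hs : locStart n (fun m => α (p + (m : ZMod N))) 0 = blockStartIdx α p := by
    rw [locStart_eq hn hN α p 0]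
    norm_num
  have he : locEnd n (fun m => α (p + (m : ZMod N))) 0 = blockEndIdx α p := by
    rw [locEnd_eq hn hN α p 0]
    norm_num
  set s := blockStartIdx α p with hsdef
  set e := blockEndIdx α p with hedef
  have hbreakS : α (p - (s:ZMod N)) ≤ α (p - (s:ZMod N) - 1) := (start_key hn hN α p).1
  have hbreakE : α (p + (e:ZMod N) + 1) ≤ α (p + (e:ZMod N)) := (end_key hn hN α p).1
  have hs' : locStart n (fun m => α (p + (m : ZMod N))) (-(s:ℤ)-1) =
      blockStartIdx α (p - (s:ZMod N) - 1) := by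
    rw [locStart_eq hn hN α p _]
    congr 1
    push_cast
    ring
  have he' : locEnd n (fun m => α (p + (m : ZMod N))) ((e:ℤ)+1) =
      blockEndIdx α (p + (e:ZMod N) + 1) := by
    rw [locEnd_eq hn hN α p _]
    congr 1
    push_cast
    ring
  set s' := blockStartIdx α (p - (s:ZMod N) - 1) with hs'def
  set e' := blockEndIdx α (p + (e:ZMod N) + 1) with he'def
  have hE0 : blockEndIdx α (p - (s:ZMod N) - 1) = 0 := by
    apply blockEndIdx_eq_zero hN
    simpa [sub_add_cancel] using hbreakS
  have hS0 : blockStartIdx α (p + (e:ZMod N) + 1) = 0 := by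
    apply blockStartIdx_eq_zero hN
    simpa [add_sub_cancel_right] using hbreakE
  have hS1 : ((List.range (s'+1)).map (fun (t : ℕ) =>
      α (p + ((((-(s:ℤ)-1-(s':ℤ)+(t:ℤ)) : ℤ)) : ZMod N)))).toFinset
      = blockSet α (blockStart α p - 1) := by
    have harg : blockStart α p - 1 = p - (s:ZMod N) - 1 := by
      unfold blockStart
      rw [← hsdef]
    rw [harg]
    unfold blockSet
    rw [blockList_eq]
    unfold blockLen blockStart
    rw [← hs'def, hE0]
    congr 1
    apply List.map_congr_left
    intro t _
    congr 1
    push_cast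
    ring
  have hS2 : ((List.range (s+e+1)).map (fun (t : ℕ) =>
      α (p + ((((-(s:ℤ)+(t:ℤ)) : ℤ)) : ZMod N)))).toFinset = blockSet α p := by
    unfold blockSet
    rw [blockList_eq]
    unfold blockLen blockStart
    rw [← hsdef, ← hedef]
    congr 1
    apply List.map_congr_left
    intro t _
    congr 1
    push_cast
    ring
  have hS3 : ((List.range (e'+1)).map (fun (t : ℕ) =>
      α (p + (((((e:ℤ)+1+(t:ℤ)) : ℤ)) : ZMod N)))).toFinset = blockSet α (blockEnd α p + 1) := by
    have harg : blockEnd α p + 1 = p + (e:ZMod N) + 1 := by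
      unfold blockEnd
      rw [← hedef]
    rw [harg]
    unfold blockSet
    rw [blockList_eq]
    unfold blockLen blockStart
    rw [hS0, ← he'def]
    simp only [Nat.zero_add]
    congr 1
    apply List.map_congr_left
    intro t _
    congr 1
    push_cast
    ring
  have hg0 : α (p + ((0:ℤ) : ZMod N)) = α p := by
    norm_num
  simp only [locPrule]
  rw [hs, he, hs', he', hS1, hS2, hS3, hg0]
  rfl

end LocalRule

/-- The propagation rule `P` is a CA rule of radius `2n − 1`:
there is a single local rule `f` realizing `P` on every chain length `N ≥ 1`. -/
theorem propagation_rule_is_CA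
    (n : ℕ) (hn : 2 ≤ n) :
    ∃ f : (Fin (2*(2*n-1)+1) → Fin n) → Fin n,
      ∀ (N : ℕ), 1 ≤ N → ∀ (α : Config n N) (j : ZMod N),
        Prule α j = caStep n (2*n-1) f N α j := by
  refine ⟨fun w => locPrule n (fun m => w ⟨((2*(n:ℤ)-1) + m).toNat % (2*(2*n-1)+1),
      Nat.mod_lt _ (Nat.succ_pos _)⟩), ?_⟩
  intro N hN α j
  rw [← locPrule_eq_Prule hn hN α j]
  show locPrule n (fun m => α (j + (m : ZMod N))) = caStep n (2*n-1) _ N α j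
  simp only [caStep]
  apply locPrule_congr hn
  intro m h1 h2
  congr 1
  have h0 : ((2*(n:ℤ)-1) + m).toNat % (2*(2*n-1)+1) = ((2*(n:ℤ)-1) + m).toNat :=
    Nat.mod_eq_of_lt (by omega)
  rw [h0]
  have hnn : (0:ℤ) ≤ 2*(n:ℤ)-1+m := by omega
  have e1 : ((((2*(n:ℤ)-1) + m).toNat : ℕ) : ZMod N) = ((2*(n:ℤ)-1+m : ℤ) : ZMod N) := by
    rw [← Int.cast_natCast, Int.toNat_of_nonneg hnn]
  rw [e1]
  have e2 : ((2*n-1 : ℕ) : ZMod N) = ((2*(n:ℤ)-1 : ℤ) : ZMod N) := by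
    rw [Nat.cast_sub (by omega : 1 ≤ 2*n)]
    push_cast
    ring
  rw [e2]
  push_cast
  ring

end DensityCA
end

section
/- Let α be a configuration on N sites whose EBs interact only elastically with each other (i.e., the state sets of its EBs are pairwise comparable under inclusion). Then for every state i ∈ Fin n: applying the propagation rule P exactly ⌈⌈(N−1)/2⌉/2⌉ times to α yields the constant configuration with every site in state i if and only if α ∈ Ω_i. -/
namespace DensityCA

section Gen

variable {n N : ℕ}

instance isBreak.dec (γ : Config n N) (p : ZMod N) : Decidable (isBreak γ p) :=
  inferInstanceAs (Decidable (γ (p+1) ≤ γ p))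

lemma find?_range_eq (P : ℕ → Bool) (k : ℕ) (hP : P k = true)
    (hmin : ∀ j, j < k → P j = false) :
    ∀ M, k < M → (List.range M).find? P = some k := by
  intro M
  induction M with
  | zero => omega
  | succ m ih =>
    intro hk
    rw [List.range_succ, List.find?_append]
    rcases Nat.lt_or_ge k m with h | h
    · rw [ih h]; rfl
    · have hkm : k = m := by omega
      subst hkm
      have hnone : (List.range k).find? P = none := by
        rw [List.find?_eq_none]
        intro x hx
        simp only [List.mem_range] at hx
        simp [hmin x hx]
      rw [hnone]
      simp [hP]

lemma exists_break (hN : 0 < N) (γ : Config n N) (p : ZMod N) :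
    ∃ k, k < N ∧ isBreak γ (p + (k : ZMod N)) := by
  by_contra h
  push_neg at h
  have hlt : ∀ k, k < N → γ (p + (k : ZMod N)) < γ (p + (k : ZMod N) + 1) := by
    intro k hk
    exact lt_of_not_ge (h k hk)
  have key : ∀ m, m ≤ N → 1 ≤ m → γ p < γ (p + (m : ZMod N)) := by
    intro m
    induction m with
    | zero => omega
    | succ t iht =>
      intro hm _
      have hc : ((t + 1 : ℕ) : ZMod N) = (t : ZMod N) + 1 := by push_cast; ring
      rw [hc, ← add_assoc]
      rcases Nat.eq_zero_or_pos t with ht | ht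
      · subst ht
        have := hlt 0 (by omega)
        simpa using this
      · exact (iht (by omega) ht).trans (hlt t (by omega))
  have := key N le_rfl hN
  rw [ZMod.natCast_self] at this
  simp at this

lemma blockEndIdx_spec (hN : 0 < N) (γ : Config n N) (p : ZMod N) :
    blockEndIdx γ p < N ∧ isBreak γ (p + (blockEndIdx γ p : ZMod N)) ∧
      ∀ j, j < blockEndIdx γ p → ¬ isBreak γ (p + (j : ZMod N)) := by
  have hex : ∃ k, k < N ∧ isBreak γ (p + (k : ZMod N)) := exists_break hN γ p
  have hspec := Nat.find_spec hex
  have heq : blockEndIdx γ p = Nat.find hex := by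
    unfold blockEndIdx
    rw [find?_range_eq _ (Nat.find hex) (decide_eq_true hspec.2) ?_ N hspec.1]
    · rfl
    · intro j hj
      have := Nat.find_min hex hj
      simp only [decide_eq_false_iff_not]
      intro hc
      exact this ⟨by omega, hc⟩
  rw [heq]
  refine ⟨hspec.1, hspec.2, ?_⟩
  intro j hj hc
  exact (Nat.find_min hex hj) ⟨by omega, hc⟩

lemma blockStartIdx_spec (hN : 0 < N) (γ : Config n N) (p : ZMod N) :
    blockStartIdx γ p < N ∧ isBreak γ (p - (blockStartIdx γ p : ZMod N) - 1) ∧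
      ∀ j, j < blockStartIdx γ p → ¬ isBreak γ (p - (j : ZMod N) - 1) := by
  have hex : ∃ k, k < N ∧ isBreak γ (p - (k : ZMod N) - 1) := by
    obtain ⟨k, hk, hb⟩ := exists_break hN γ p
    refine ⟨N - k - 1, by omega, ?_⟩
    have hc : p - ((N - k - 1 : ℕ) : ZMod N) - 1 = p + (k : ZMod N) := by
      have h1 : ((N - k - 1 : ℕ) : ZMod N) + 1 + (k : ZMod N) = 0 := by
        have h2 : ((N - k - 1 : ℕ) : ZMod N) + 1 + (k : ZMod N)
            = ((N - k - 1 + 1 + k : ℕ) : ZMod N) := by push_cast; ring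
        rw [h2]
        have h3 : N - k - 1 + 1 + k = N := by omega
        rw [h3, ZMod.natCast_self]
      linear_combination -h1
    rw [hc]; exact hb
  have hspec := Nat.find_spec hex
  have heq : blockStartIdx γ p = Nat.find hex := by
    unfold blockStartIdx
    rw [find?_range_eq _ (Nat.find hex) ?_ ?_ N hspec.1]
    · rfl
    · have hb : γ (p - (Nat.find hex : ZMod N)) ≤ γ (p - (Nat.find hex : ZMod N) - 1) := by
        have h4 : γ (p - (Nat.find hex : ZMod N) - 1 + 1) ≤ γ (p - (Nat.find hex : ZMod N) - 1) := hspec.2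
        have h5 : p - (Nat.find hex : ZMod N) - 1 + 1 = p - (Nat.find hex : ZMod N) := by ring
        rwa [h5] at h4
      exact decide_eq_true hb
    · intro j hj
      have := Nat.find_min hex hj
      simp only [decide_eq_false_iff_not]
      intro hc
      refine this ⟨by omega, ?_⟩
      simp only [isBreak]
      have : p - (j : ZMod N) - 1 + 1 = p - (j : ZMod N) := by ring
      rw [this]
      exact hc
  rw [heq]
  refine ⟨hspec.1, hspec.2, ?_⟩
  intro j hj hc
  exact (Nat.find_min hex hj) ⟨by omega, hc⟩

end Gen


namespace Scratch
variable {n N : ℕ}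

def nlist (γ : Config n N) (q : ZMod N) (L : ℕ) : List (Fin n) :=
  (List.range L).map (fun t : ℕ => γ (q + ((t : ℕ) : ZMod N)))

lemma blockList_norm (γ : Config n N) (p : ZMod N) :
    blockList γ p = nlist γ (blockStart γ p) (blockLen γ p) := by
  rw [blockList, nlist]
  show List.map _ ((List.range (blockLen γ p)).flatMap fun a => [((a : ℕ) : ZMod N)]) = _
  induction (List.range (blockLen γ p)) with
  | nil => rfl
  | cons a l ih => simp_all

structure RunData (γ : Config n N) (q : ZMod N) (ℓ : ℕ) : Prop where
  pos : 1 ≤ ℓ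
  le : ℓ ≤ N
  inc : ∀ t, t + 1 < ℓ → γ (q + (t : ZMod N)) < γ (q + (t : ZMod N) + 1)
  pre : γ q ≤ γ (q - 1)
  post : γ (q + ((ℓ : ℕ) : ZMod N)) ≤ γ (q + ((ℓ - 1 : ℕ) : ZMod N))

lemma cast_add_add (q : ZMod N) (a b : ℕ) :
    q + ((a : ℕ) : ZMod N) + ((b : ℕ) : ZMod N) = q + (((a + b : ℕ) : ℕ) : ZMod N) := by
  push_cast; ring

/-- no break inside a run -/
lemma run_nobreak {γ : Config n N} {q : ZMod N} {ℓ : ℕ} (hr : RunData γ q ℓ)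
    {t : ℕ} (ht : t + 1 < ℓ) : ¬ isBreak γ (q + (t : ZMod N)) := by
  have := hr.inc t ht
  simp only [isBreak]
  exact not_le_of_gt this

/-- break just before the run -/
lemma run_prebreak {γ : Config n N} {q : ZMod N} {ℓ : ℕ} (hr : RunData γ q ℓ) :
    isBreak γ (q - 1) := by
  simp only [isBreak]
  have h1 : q - 1 + 1 = q := by ring
  rw [h1]
  exact hr.pre

/-- break at the end of the run -/
lemma run_postbreak {γ : Config n N} {q : ZMod N} {ℓ : ℕ} (hr : RunData γ q ℓ) :
    isBreak γ (q + ((ℓ - 1 : ℕ) : ZMod N)) := by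
  simp only [isBreak]
  have h1 : q + ((ℓ - 1 : ℕ) : ZMod N) + 1 = q + ((ℓ : ℕ) : ZMod N) := by
    have h2 : ℓ - 1 + 1 = ℓ := by
      have := hr.pos; omega
    calc q + ((ℓ - 1 : ℕ) : ZMod N) + 1 = q + (((ℓ - 1 + 1 : ℕ) : ℕ) : ZMod N) := by
          push_cast; ring
      _ = q + ((ℓ : ℕ) : ZMod N) := by rw [h2]
  rw [h1]
  exact hr.post

lemma local_idx (hN : 0 < N) {γ : Config n N} {q : ZMod N} {ℓ : ℕ} (hr : RunData γ q ℓ)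
    (u : ℕ) (hu : u < ℓ) :
    blockStartIdx γ (q + (u : ZMod N)) = u ∧
      blockEndIdx γ (q + (u : ZMod N)) = ℓ - 1 - u := by
  set p := q + (u : ZMod N) with hp
  obtain ⟨hsN, hsb, hsmin⟩ := blockStartIdx_spec hN γ p
  obtain ⟨heN, heb, hemin⟩ := blockEndIdx_spec hN γ p
  -- site identities
  have hsite1 : ∀ j : ℕ, j ≤ u → p - (j : ZMod N) = q + ((u - j : ℕ) : ZMod N) := by
    intro j hj
    have h2 : u - j + j = u := by omega
    rw [hp]
    have : ((u : ℕ) : ZMod N) = ((u - j : ℕ) : ZMod N) + (j : ZMod N) := by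
      rw [← Nat.cast_add, h2]
    rw [this]; ring
  have hsite2 : ∀ j : ℕ, p + (j : ZMod N) = q + ((u + j : ℕ) : ZMod N) := by
    intro j
    rw [hp]
    rw [show ((u + j : ℕ) : ZMod N) = (u : ZMod N) + (j : ZMod N) by push_cast; ring]
    ring
  -- start side
  have hstart : blockStartIdx γ p = u := by
    by_contra hne
    rcases Nat.lt_or_ge (blockStartIdx γ p) u with h | h
    · -- spec break at p - s - 1 , but site is inside run
      set s := blockStartIdx γ p
      have hin : p - (s : ZMod N) - 1 = q + ((u - s - 1 : ℕ) : ZMod N) := by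
        have h2 : u - s - 1 + (s + 1) = u := by omega
        rw [hp]
        have : ((u : ℕ) : ZMod N) = ((u - s - 1 : ℕ) : ZMod N) + ((s + 1 : ℕ) : ZMod N) := by
          rw [← Nat.cast_add, h2]
        rw [this]
        push_cast
        ring
      rw [hin] at hsb
      exact run_nobreak hr (by omega) hsb
    · have h' : u < blockStartIdx γ p := by omega
      have hnb := hsmin u h'
      have : p - (u : ZMod N) - 1 = q - 1 := by
        rw [hsite1 u le_rfl]
        simp
      rw [this] at hnb
      exact hnb (run_prebreak hr)
  -- end side
  have hend : blockEndIdx γ p = ℓ - 1 - u := by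
    by_contra hne
    rcases Nat.lt_or_ge (blockEndIdx γ p) (ℓ - 1 - u) with h | h
    · set e := blockEndIdx γ p
      have hin : p + (e : ZMod N) = q + ((u + e : ℕ) : ZMod N) := hsite2 e
      rw [hin] at heb
      exact run_nobreak hr (by omega) heb
    · have h' : ℓ - 1 - u < blockEndIdx γ p := by omega
      have hnb := hemin _ h'
      have : p + ((ℓ - 1 - u : ℕ) : ZMod N) = q + ((ℓ - 1 : ℕ) : ZMod N) := by
        rw [hsite2]
        congr 2
        omega
      rw [this] at hnb
      exact hnb (run_postbreak hr)
  exact ⟨hstart, hend⟩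

lemma local_block (hN : 0 < N) {γ : Config n N} {q : ZMod N} {ℓ : ℕ} (hr : RunData γ q ℓ)
    (u : ℕ) (hu : u < ℓ) :
    blockStart γ (q + (u : ZMod N)) = q ∧
    blockEnd γ (q + (u : ZMod N)) = q + ((ℓ - 1 : ℕ) : ZMod N) ∧
    blockLen γ (q + (u : ZMod N)) = ℓ ∧
    blockList γ (q + (u : ZMod N)) = nlist γ q ℓ := by
  obtain ⟨hs, he⟩ := local_idx hN hr u hu
  have hstart : blockStart γ (q + (u : ZMod N)) = q := by
    rw [blockStart, hs]; ring
  have hlen : blockLen γ (q + (u : ZMod N)) = ℓ := by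
    rw [blockLen, hs, he]; omega
  have hende : blockEnd γ (q + (u : ZMod N)) = q + ((ℓ - 1 : ℕ) : ZMod N) := by
    rw [blockEnd, he]
    rw [show (q : ZMod N) + (u : ZMod N) + ((ℓ - 1 - u : ℕ) : ZMod N)
        = q + ((u + (ℓ - 1 - u) : ℕ) : ZMod N) by push_cast; ring]
    congr 2
    omega
  refine ⟨hstart, hende, hlen, ?_⟩
  rw [blockList_norm, hstart, hlen]

lemma self_run (hN : 0 < N) (γ : Config n N) (p : ZMod N) :
    RunData γ (blockStart γ p) (blockLen γ p) ∧
      p = blockStart γ p + ((blockStartIdx γ p : ℕ) : ZMod N) ∧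
      blockStartIdx γ p < blockLen γ p := by
  obtain ⟨hsN, hsb, hsmin⟩ := blockStartIdx_spec hN γ p
  obtain ⟨heN, heb, hemin⟩ := blockEndIdx_spec hN γ p
  set s := blockStartIdx γ p
  set e := blockEndIdx γ p
  have hq : blockStart γ p = p - (s : ZMod N) := rfl
  have hl : blockLen γ p = s + e + 1 := rfl
  have hpq : p = blockStart γ p + (s : ZMod N) := by rw [hq]; ring
  have hleN : s + e + 1 ≤ N := by
    by_contra hcon
    have hj : N - e - 1 < s := by omega
    have hnb := hsmin _ hj
    have hsite : p - ((N - e - 1 : ℕ) : ZMod N) - 1 = p + (e : ZMod N) := by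
      have h1 : ((N - e - 1 : ℕ) : ZMod N) + 1 + (e : ZMod N) = 0 := by
        rw [show ((N - e - 1 : ℕ) : ZMod N) + 1 + (e : ZMod N)
            = ((N - e - 1 + 1 + e : ℕ) : ZMod N) by push_cast; ring]
        rw [show N - e - 1 + 1 + e = N by omega, ZMod.natCast_self]
      linear_combination -h1
    rw [hsite] at hnb
    exact hnb heb
  have hinc : ∀ t, t + 1 < blockLen γ p →
      γ (blockStart γ p + (t : ZMod N)) < γ (blockStart γ p + (t : ZMod N) + 1) := by
    intro t ht
    rw [hl] at ht
    rcases Nat.lt_or_ge t s with h | h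
    · have hnb := hsmin (s - t - 1) (by omega)
      have hsite : p - ((s - t - 1 : ℕ) : ZMod N) - 1 = blockStart γ p + (t : ZMod N) := by
        rw [hq]
        have h2 : (s : ZMod N) = ((s - t - 1 : ℕ) : ZMod N) + 1 + (t : ZMod N) := by
          rw [show ((s - t - 1 : ℕ) : ZMod N) + 1 + (t : ZMod N)
              = ((s - t - 1 + 1 + t : ℕ) : ZMod N) by push_cast; ring]
          congr 1
          omega
        rw [h2]; ring
      rw [hsite] at hnb
      simp only [isBreak] at hnb
      exact lt_of_not_ge hnb
    · have hnb := hemin (t - s) (by omega)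
      have hsite : p + ((t - s : ℕ) : ZMod N) = blockStart γ p + (t : ZMod N) := by
        rw [hq]
        have h2 : ((t - s : ℕ) : ZMod N) + (s : ZMod N) = (t : ZMod N) := by
          rw [← Nat.cast_add]
          congr 1
          omega
        linear_combination h2
      rw [hsite] at hnb
      simp only [isBreak] at hnb
      exact lt_of_not_ge hnb
  have hpre : γ (blockStart γ p) ≤ γ (blockStart γ p - 1) := by
    have : p - (s : ZMod N) - 1 = blockStart γ p - 1 := by rw [hq]
    rw [this] at hsb
    simp only [isBreak] at hsb
    have h1 : blockStart γ p - 1 + 1 = blockStart γ p := by ring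
    rwa [h1] at hsb
  have hpost : γ (blockStart γ p + ((blockLen γ p : ℕ) : ZMod N)) ≤
      γ (blockStart γ p + ((blockLen γ p - 1 : ℕ) : ZMod N)) := by
    have hsite : p + (e : ZMod N) = blockStart γ p + ((blockLen γ p - 1 : ℕ) : ZMod N) := by
      rw [hq, hl]
      rw [show (s + e + 1 - 1 : ℕ) = s + e by omega]
      push_cast
      ring
    rw [hsite] at heb
    simp only [isBreak] at heb
    have h1 : blockStart γ p + ((blockLen γ p - 1 : ℕ) : ZMod N) + 1
        = blockStart γ p + ((blockLen γ p : ℕ) : ZMod N) := by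
      rw [hl, show (s + e + 1 - 1 : ℕ) = s + e by omega]
      push_cast
      ring
    rwa [h1] at heb
  exact ⟨⟨by rw [hl]; omega, by rw [hl]; omega, hinc, hpre, hpost⟩, hpq, by rw [hl]; omega⟩

/-- block data is invariant along a block -/
lemma block_inv (hN : 0 < N) (γ : Config n N) (p : ZMod N) (u : ℕ)
    (hu : u < blockLen γ p) :
    blockStart γ (blockStart γ p + (u : ZMod N)) = blockStart γ p ∧
    blockLen γ (blockStart γ p + (u : ZMod N)) = blockLen γ p ∧
    blockList γ (blockStart γ p + (u : ZMod N)) = blockList γ p ∧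
    blockEnd γ (blockStart γ p + (u : ZMod N)) = blockEnd γ p := by
  obtain ⟨hr, hpq, hsl⟩ := self_run hN γ p
  obtain ⟨h1, h2, h3, h4⟩ := local_block hN hr u hu
  obtain ⟨h1', h2', h3', h4'⟩ := local_block hN hr (blockStartIdx γ p) hsl
  rw [← hpq] at h1' h2' h3' h4'
  refine ⟨h1, by rw [h3, h3'], by rw [h4, h4'], ?_⟩
  rw [h2, h2']

lemma blockEnd_eq (hN : 0 < N) (γ : Config n N) (p : ZMod N) :
    blockEnd γ p = blockStart γ p + ((blockLen γ p - 1 : ℕ) : ZMod N) := by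
  obtain ⟨hr, hpq, hsl⟩ := self_run hN γ p
  obtain ⟨h1, h2, h3, h4⟩ := local_block hN hr (blockStartIdx γ p) hsl
  rw [← hpq] at h2
  exact h2


lemma run_mono {γ : Config n N} {q : ZMod N} {ℓ : ℕ} (hr : RunData γ q ℓ) :
    ∀ v u, u ≤ v → v < ℓ → γ (q + (u : ZMod N)) ≤ γ (q + (v : ZMod N)) := by
  intro v
  induction v with
  | zero => intro u hu _; rw [Nat.le_zero.mp hu]
  | succ w ih =>
    intro u hu hv
    rcases Nat.eq_or_lt_of_le hu with h | h
    · rw [h]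
    · have h1 : γ (q + (u : ZMod N)) ≤ γ (q + (w : ZMod N)) := ih u (by omega) (by omega)
      have h2 := hr.inc w hv
      have hc : ((w + 1 : ℕ) : ZMod N) = (w : ZMod N) + 1 := by push_cast; ring
      rw [hc, ← add_assoc]
      exact h1.trans h2.le

lemma run_strict_mono {γ : Config n N} {q : ZMod N} {ℓ : ℕ} (hr : RunData γ q ℓ)
    {u v : ℕ} (huv : u < v) (hv : v < ℓ) :
    γ (q + (u : ZMod N)) < γ (q + (v : ZMod N)) := by
  have h1 : γ (q + (u : ZMod N)) ≤ γ (q + ((v - 1 : ℕ) : ZMod N)) :=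
    run_mono hr (v - 1) u (by omega) (by omega)
  have h2 := hr.inc (v - 1) (by omega)
  have hc : (v : ZMod N) = ((v - 1 : ℕ) : ZMod N) + 1 := by
    rw [show ((v - 1 : ℕ) : ZMod N) + 1 = ((v - 1 + 1 : ℕ) : ZMod N) by push_cast; ring]
    congr 1
    omega
  rw [hc, ← add_assoc]
  exact lt_of_le_of_lt h1 h2

lemma blockList_nodup (hN : 0 < N) (γ : Config n N) (p : ZMod N) :
    (blockList γ p).Nodup := by
  obtain ⟨hr, hpq, hsl⟩ := self_run hN γ p
  rw [blockList_norm, nlist]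
  refine List.Nodup.map_on (f := fun t : ℕ => γ (blockStart γ p + ((t : ℕ) : ZMod N)))
    (l := List.range (blockLen γ p)) ?_ (List.nodup_range (n := blockLen γ p))
  intro t ht t' ht' hf
  simp only [List.mem_range] at ht ht'
  by_contra hne
  rcases Nat.lt_or_ge t t' with h | h
  · exact absurd hf (ne_of_lt (run_strict_mono hr h ht'))
  · have h' : t' < t := by omega
    exact absurd hf.symm (ne_of_lt (run_strict_mono hr h' ht))

lemma blockSet_card (hN : 0 < N) (γ : Config n N) (p : ZMod N) :
    (blockSet γ p).card = blockLen γ p := by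
  rw [blockSet, List.toFinset_card_of_nodup (blockList_nodup hN γ p)]
  rw [blockList_norm, nlist]
  simp

lemma mem_blockSet_iff (hN : 0 < N) (γ : Config n N) (p : ZMod N) (x : Fin n) :
    x ∈ blockSet γ p ↔ ∃ t, t < blockLen γ p ∧ γ (blockStart γ p + (t : ZMod N)) = x := by
  rw [blockSet, List.mem_toFinset, blockList_norm, nlist]
  simp only [List.mem_map, List.mem_range]

/-! neighbour-block maps -/

def nb (γ : Config n N) (p : ZMod N) : ZMod N := blockEnd γ p + 1

def pb (γ : Config n N) (p : ZMod N) : ZMod N := blockStart γ p - 1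

def Dnear (γ : Config n N) (t : ℕ) (p : ZMod N) : Prop :=
  ∃ a, a ≤ t ∧ (blockLen γ ((nb γ)^[a] p) = 1 ∨ blockLen γ ((pb γ)^[a] p) = 1)

lemma isBreak_blockEnd (hN : 0 < N) (γ : Config n N) (p : ZMod N) :
    isBreak γ (blockEnd γ p) := by
  obtain ⟨hr, hpq, hsl⟩ := self_run hN γ p
  rw [blockEnd_eq hN]
  exact run_postbreak hr

lemma isBreak_pb (hN : 0 < N) (γ : Config n N) (p : ZMod N) :
    isBreak γ (blockStart γ p - 1) := by
  obtain ⟨hr, hpq, hsl⟩ := self_run hN γ p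
  exact run_prebreak hr

lemma blockStart_nb (hN : 0 < N) (γ : Config n N) (p : ZMod N) :
    blockStart γ (nb γ p) = nb γ p := by
  obtain ⟨hsN, hsb, hsmin⟩ := blockStartIdx_spec hN γ (nb γ p)
  have h0 : blockStartIdx γ (nb γ p) = 0 := by
    by_contra h
    have hnb := hsmin 0 (by omega)
    have : nb γ p - ((0 : ℕ) : ZMod N) - 1 = blockEnd γ p := by
      rw [nb]; push_cast; ring
    rw [this] at hnb
    exact hnb (isBreak_blockEnd hN γ p)
  rw [blockStart, h0]
  push_cast; ring

lemma blockEnd_pb (hN : 0 < N) (γ : Config n N) (p : ZMod N) :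
    blockEnd γ (pb γ p) = pb γ p := by
  obtain ⟨heN, heb, hemin⟩ := blockEndIdx_spec hN γ (pb γ p)
  have h0 : blockEndIdx γ (pb γ p) = 0 := by
    by_contra h
    have hnb := hemin 0 (by omega)
    have : pb γ p + ((0 : ℕ) : ZMod N) = blockStart γ p - 1 := by
      rw [pb]; push_cast; ring
    rw [this] at hnb
    exact hnb (isBreak_pb hN γ p)
  rw [blockEnd, h0]
  push_cast; ring

lemma pb_nb (hN : 0 < N) (γ : Config n N) (p : ZMod N) :
    pb γ (nb γ p) = blockEnd γ p := by
  rw [pb, blockStart_nb hN, nb]; ring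

lemma nb_pb (hN : 0 < N) (γ : Config n N) (p : ZMod N) :
    nb γ (pb γ p) = blockStart γ p := by
  rw [nb, blockEnd_pb hN, pb]; ring

/-- membership of a site in its own block form -/
lemma self_in_block (hN : 0 < N) (γ : Config n N) (p : ZMod N) :
    ∃ u, u < blockLen γ p ∧ p = blockStart γ p + (u : ZMod N) := by
  obtain ⟨hr, hpq, hsl⟩ := self_run hN γ p
  exact ⟨blockStartIdx γ p, hsl, hpq⟩

lemma blockEnd_in_block (hN : 0 < N) (γ : Config n N) (p : ZMod N) :
    blockEnd γ p = blockStart γ p + ((blockLen γ p - 1 : ℕ) : ZMod N) ∧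
      blockLen γ p - 1 < blockLen γ p := by
  obtain ⟨hr, hpq, hsl⟩ := self_run hN γ p
  exact ⟨blockEnd_eq hN γ p, by have := hr.pos; omega⟩

/-- block data invariance at the end of a block -/
lemma inv_end (hN : 0 < N) (γ : Config n N) (p : ZMod N) :
    blockStart γ (blockEnd γ p) = blockStart γ p ∧
      blockLen γ (blockEnd γ p) = blockLen γ p := by
  obtain ⟨he, hl⟩ := blockEnd_in_block hN γ p
  have := block_inv hN γ p _ hl
  rw [← he] at this
  exact ⟨this.1, this.2.1⟩

lemma inv_start (hN : 0 < N) (γ : Config n N) (p : ZMod N) :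
    blockStart γ (blockStart γ p) = blockStart γ p ∧
      blockLen γ (blockStart γ p) = blockLen γ p := by
  obtain ⟨hr, hpq, hsl⟩ := self_run hN γ p
  have := block_inv hN γ p 0 (by have := hr.pos; omega)
  rw [show blockStart γ p + ((0:ℕ) : ZMod N) = blockStart γ p by push_cast; ring] at this
  exact ⟨this.1, this.2.1⟩

lemma pb_blockEnd (hN : 0 < N) (γ : Config n N) (p : ZMod N) :
    pb γ (blockEnd γ p) = pb γ p := by
  rw [pb, (inv_end hN γ p).1, pb]

lemma nb_blockStart (hN : 0 < N) (γ : Config n N) (p : ZMod N) :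
    nb γ (blockStart γ p) = nb γ p := by
  rw [nb, blockEnd_eq hN, (inv_start hN γ p).1, (inv_start hN γ p).2, nb, blockEnd_eq hN]

lemma Dnear_mono (γ : Config n N) {t t' : ℕ} (h : t ≤ t') {p : ZMod N} :
    Dnear γ t p → Dnear γ t' p := by
  rintro ⟨a, ha, hd⟩
  exact ⟨a, by omega, hd⟩

lemma Dnear_zero (γ : Config n N) (p : ZMod N) :
    Dnear γ 0 p ↔ blockLen γ p = 1 := by
  constructor
  · rintro ⟨a, ha, hd⟩
    have : a = 0 := by omega
    subst this
    simpa using hd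
  · intro h
    exact ⟨0, le_rfl, by simp only [Function.iterate_zero, id_eq]; exact Or.inl h⟩

lemma Dnear_succ (hN : 0 < N) (γ : Config n N) (t : ℕ) (p : ZMod N) :
    Dnear γ (t+1) p ↔
      blockLen γ p = 1 ∨ Dnear γ t (nb γ p) ∨ Dnear γ t (pb γ p) := by
  constructor
  · rintro ⟨a, ha, hd⟩
    match a with
    | 0 => simp at hd; exact Or.inl hd
    | b+1 =>
      rcases hd with hd | hd
      · rw [Function.iterate_succ_apply] at hd
        exact Or.inr (Or.inl ⟨b, by omega, Or.inl hd⟩)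
      · rw [Function.iterate_succ_apply] at hd
        exact Or.inr (Or.inr ⟨b, by omega, Or.inr hd⟩)
  · rintro (h | ⟨b, hb, hd⟩ | ⟨b, hb, hd⟩)
    · exact ⟨0, by omega, by simp only [Function.iterate_zero, id_eq]; exact Or.inl h⟩
    · -- from nb side
      rcases hd with hd | hd
      · exact ⟨b+1, by omega, Or.inl (by rwa [Function.iterate_succ_apply])⟩
      · match b with
        | 0 =>
          simp only [Function.iterate_zero, id_eq] at hd
          exact ⟨1, by omega, Or.inl (by simpa using hd)⟩
        | c+1 =>
          rw [Function.iterate_succ_apply, pb_nb hN] at hd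
          match c with
          | 0 =>
            simp only [Function.iterate_zero, id_eq] at hd
            rw [(inv_end hN γ p).2] at hd
            exact ⟨0, by omega, Or.inl (by simpa using hd)⟩
          | d+1 =>
            rw [Function.iterate_succ_apply, pb_blockEnd hN] at hd
            rw [← Function.iterate_succ_apply] at hd
            exact ⟨d+1, by omega, Or.inr hd⟩
    · -- from pb side
      rcases hd with hd | hd
      · match b with
        | 0 =>
          simp only [Function.iterate_zero, id_eq] at hd
          exact ⟨1, by omega, Or.inr (by simpa using hd)⟩
        | c+1 =>
          rw [Function.iterate_succ_apply, nb_pb hN] at hd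
          match c with
          | 0 =>
            simp only [Function.iterate_zero, id_eq] at hd
            rw [(inv_start hN γ p).2] at hd
            exact ⟨0, by omega, Or.inl (by simpa using hd)⟩
          | d+1 =>
            rw [Function.iterate_succ_apply, nb_blockStart hN] at hd
            rw [← Function.iterate_succ_apply] at hd
            exact ⟨d+1, by omega, Or.inl hd⟩
      · exact ⟨b+1, by omega, Or.inr (by rwa [Function.iterate_succ_apply])⟩

/-- `Dnear` is constant on blocks -/
lemma Dnear_block_inv (hN : 0 < N) (γ : Config n N) (t : ℕ) (p : ZMod N)
    (u : ℕ) (hu : u < blockLen γ p) :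
    Dnear γ t (blockStart γ p + (u : ZMod N)) ↔ Dnear γ t p := by
  obtain ⟨hbs, hbl, hlist, hbe⟩ := block_inv hN γ p u hu
  have hnb : nb γ (blockStart γ p + (u : ZMod N)) = nb γ p := by rw [nb, hbe, nb]
  have hpb : pb γ (blockStart γ p + (u : ZMod N)) = pb γ p := by rw [pb, hbs, pb]
  constructor
  · rintro ⟨a, ha, hd⟩
    match a with
    | 0 =>
      simp only [Function.iterate_zero, id_eq] at hd
      rw [hbl] at hd
      exact ⟨0, by omega, by simpa using hd⟩
    | b+1 =>
      rw [Function.iterate_succ_apply, Function.iterate_succ_apply, hnb, hpb] at hd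
      exact ⟨b+1, ha, by rw [Function.iterate_succ_apply, Function.iterate_succ_apply]; exact hd⟩
  · rintro ⟨a, ha, hd⟩
    match a with
    | 0 =>
      simp only [Function.iterate_zero, id_eq] at hd
      exact ⟨0, by omega, by simp only [Function.iterate_zero, id_eq]; rw [hbl]; exact hd⟩
    | b+1 =>
      refine ⟨b+1, ha, ?_⟩
      rw [Function.iterate_succ_apply, Function.iterate_succ_apply, hnb, hpb]
      rw [Function.iterate_succ_apply, Function.iterate_succ_apply] at hd
      exact hd

section CaseA

variable {γ : Config n N} {i0 : Fin n}

/-- the value at a block start is at most `i0` -/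
lemma start_le (hN : 0 < N) (hmem : ∀ p, i0 ∈ blockSet γ p) (p : ZMod N) :
    γ (blockStart γ p) ≤ i0 := by
  obtain ⟨hr, hpq, hsl⟩ := self_run hN γ p
  obtain ⟨t, ht, he⟩ := (mem_blockSet_iff hN γ p i0).mp (hmem p)
  rw [← he]
  have h0 := run_mono hr t 0 (by omega) ht
  rw [show blockStart γ p + ((0:ℕ) : ZMod N) = blockStart γ p by push_cast; ring] at h0
  exact h0

lemma end_ge (hN : 0 < N) (hmem : ∀ p, i0 ∈ blockSet γ p) (p : ZMod N) :
    i0 ≤ γ (blockEnd γ p) := by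
  obtain ⟨hr, hpq, hsl⟩ := self_run hN γ p
  obtain ⟨t, ht, he⟩ := (mem_blockSet_iff hN γ p i0).mp (hmem p)
  rw [← he, blockEnd_eq hN]
  exact run_mono hr (blockLen γ p - 1) t (by omega) (by have := hr.pos; omega)

open Classical in
noncomputable def gam (γ : Config n N) (i0 : Fin n) (t : ℕ) : Config n N :=
  fun p => if Dnear γ t p then i0 else γ p

open Classical

lemma gam_of_D {t : ℕ} {p : ZMod N} (h : Dnear γ t p) : gam γ i0 t p = i0 := if_pos h

lemma gam_of_notD {t : ℕ} {p : ZMod N} (h : ¬ Dnear γ t p) : gam γ i0 t p = γ p := if_neg h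

/-- any value of `gam` at the last site of an (original) block is `≥ i0`,
and at the first site of a block is `≤ i0`; specialized facts: -/
lemma gam_ge_of_end (hN : 0 < N) (hmem : ∀ p, i0 ∈ blockSet γ p) (t : ℕ) (r : ZMod N)
    (hr : blockEnd γ r = r) : i0 ≤ gam γ i0 t r := by
  by_cases hD : Dnear γ t r
  · rw [gam_of_D hD]
  · rw [gam_of_notD hD, ← hr]
    exact end_ge hN hmem r

lemma gam_le_of_start (hN : 0 < N) (hmem : ∀ p, i0 ∈ blockSet γ p) (t : ℕ) (r : ZMod N)
    (hr : blockStart γ r = r) : gam γ i0 t r ≤ i0 := by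
  by_cases hD : Dnear γ t r
  · rw [gam_of_D hD]
  · rw [gam_of_notD hD, ← hr]
    exact start_le hN hmem r

lemma wiped_run (hN : 0 < N) (hmem : ∀ p, i0 ∈ blockSet γ p) (t : ℕ) (p : ZMod N)
    (hD : Dnear γ t p) : RunData (gam γ i0 t) p 1 := by
  obtain ⟨s, hs, hps⟩ := self_in_block hN γ p
  set q := blockStart γ p with hq
  refine ⟨le_rfl, hN, ?_, ?_, ?_⟩
  · intro t' ht'; omega
  · -- pre : gam p ≤ gam (p-1)
    rw [gam_of_D hD]
    rcases Nat.eq_zero_or_pos s with h0 | h0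
    · subst h0
      have hpq : p = q := by
        rw [hps]; push_cast; ring
      have h1 : p - 1 = pb γ p := by rw [pb, ← hq, ← hpq]
      have h2 : blockEnd γ (p - 1) = p - 1 := by rw [h1]; exact blockEnd_pb hN γ p
      exact gam_ge_of_end hN hmem t _ h2
    · have hcast : ((s : ℕ) : ZMod N) = ((s - 1 : ℕ) : ZMod N) + 1 := by
        rw [show ((s - 1 : ℕ) : ZMod N) + 1 = ((s - 1 + 1 : ℕ) : ZMod N) by push_cast; ring]
        congr 1; omega
      have h1 : p - 1 = q + ((s - 1 : ℕ) : ZMod N) := by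
        rw [hps, hcast]; ring
      have hDm : Dnear γ t (p - 1) := by
        rw [h1]
        exact (Dnear_block_inv hN γ t p (s-1) (by omega)).mpr
          ((Dnear_block_inv hN γ t p s hs).mp (by rw [← hps]; exact hD))
      rw [gam_of_D hDm]
  · -- post
    rw [show p + ((1 - 1 : ℕ) : ZMod N) = p by push_cast; ring, gam_of_D hD]
    rcases Nat.lt_or_ge (s+1) (blockLen γ p) with hlt | hge
    · have h1 : p + ((1:ℕ) : ZMod N) = q + ((s + 1 : ℕ) : ZMod N) := by
        rw [hps]; push_cast; ring
      have hDm : Dnear γ t (p + ((1:ℕ) : ZMod N)) := by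
        rw [h1]
        exact (Dnear_block_inv hN γ t p (s+1) hlt).mpr
          ((Dnear_block_inv hN γ t p s hs).mp (by rw [← hps]; exact hD))
      rw [gam_of_D hDm]
    · -- p is the end of its block
      have hse : s = blockLen γ p - 1 := by omega
      have hpe : p = blockEnd γ p := by
        rw [blockEnd_eq hN, ← hq, ← hse, ← hps]
      have h1 : p + ((1:ℕ) : ZMod N) = nb γ p := by
        rw [nb, ← hpe]; push_cast; ring
      rw [h1]
      exact gam_le_of_start hN hmem t _ (blockStart_nb hN γ p)

lemma wiped_data (hN : 0 < N) (hmem : ∀ p, i0 ∈ blockSet γ p) (t : ℕ) (p : ZMod N)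
    (hD : Dnear γ t p) :
    blockStart (gam γ i0 t) p = p ∧ blockEnd (gam γ i0 t) p = p ∧
      blockSet (gam γ i0 t) p = {i0} := by
  have hw := wiped_run hN hmem t p hD
  have h0 := local_block hN hw 0 (by omega)
  rw [show p + ((0:ℕ) : ZMod N) = p by push_cast; ring] at h0
  obtain ⟨h1, h2, h3, h4⟩ := h0
  refine ⟨h1, by simp [h2], ?_⟩
  rw [blockSet, h4, nlist]
  have hv : gam γ i0 t (p + ((0:ℕ) : ZMod N)) = i0 := by
    rw [show p + ((0:ℕ) : ZMod N) = p by push_cast; ring]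
    exact gam_of_D hD
  simp [List.range_succ, hv, gam_of_D hD]

lemma intact_agree (hN : 0 < N) (t : ℕ) (p : ZMod N) (hD : ¬ Dnear γ t p) :
    ∀ u, u < blockLen γ p →
      gam γ i0 t (blockStart γ p + (u : ZMod N)) = γ (blockStart γ p + (u : ZMod N)) := by
  intro u hu
  exact gam_of_notD (fun hc => hD ((Dnear_block_inv hN γ t p u hu).mp hc))

lemma intact_run (hN : 0 < N) (hmem : ∀ p, i0 ∈ blockSet γ p) (t : ℕ) (p : ZMod N)
    (hD : ¬ Dnear γ t p) : RunData (gam γ i0 t) (blockStart γ p) (blockLen γ p) := by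
  obtain ⟨hr, hpq, hsl⟩ := self_run hN γ p
  have hag := intact_agree (i0 := i0) hN t p hD
  refine ⟨hr.pos, hr.le, ?_, ?_, ?_⟩
  · intro t' ht'
    have e1 := hag t' (by omega)
    have e2 := hag (t'+1) ht'
    rw [show blockStart γ p + ((t' + 1 : ℕ) : ZMod N) = blockStart γ p + ((t' : ℕ) : ZMod N) + 1
      by push_cast; ring] at e2
    rw [e1, e2]
    exact hr.inc t' ht'
  · -- pre
    have e1 : gam γ i0 t (blockStart γ p) = γ (blockStart γ p) := by
      have := hag 0 (by have := hr.pos; omega)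
      rwa [show blockStart γ p + ((0:ℕ) : ZMod N) = blockStart γ p by push_cast; ring] at this
    rw [e1]
    have h2 : blockEnd γ (blockStart γ p - 1) = blockStart γ p - 1 := blockEnd_pb hN γ p
    by_cases hD' : Dnear γ t (blockStart γ p - 1)
    · rw [gam_of_D hD']
      exact start_le hN hmem p
    · rw [gam_of_notD hD']
      exact hr.pre
  · -- post
    have e1 : gam γ i0 t (blockStart γ p + ((blockLen γ p - 1 : ℕ) : ZMod N))
        = γ (blockStart γ p + ((blockLen γ p - 1 : ℕ) : ZMod N)) :=
      hag _ (by have := hr.pos; omega)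
    rw [e1]
    have h1 : blockStart γ p + ((blockLen γ p : ℕ) : ZMod N) = nb γ p := by
      rw [nb, blockEnd_eq hN]
      have hc : ((blockLen γ p : ℕ) : ZMod N) = ((blockLen γ p - 1 : ℕ) : ZMod N) + 1 := by
        have h2 : blockLen γ p - 1 + 1 = blockLen γ p := by have := hr.pos; omega
        calc ((blockLen γ p : ℕ) : ZMod N) = ((blockLen γ p - 1 + 1 : ℕ) : ZMod N) := by rw [h2]
          _ = ((blockLen γ p - 1 : ℕ) : ZMod N) + 1 := by push_cast; ring
      rw [hc]; ring
    rw [h1]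
    by_cases hD' : Dnear γ t (nb γ p)
    · rw [gam_of_D hD']
      rw [show blockStart γ p + ((blockLen γ p - 1 : ℕ) : ZMod N) = blockEnd γ p
        from (blockEnd_eq hN γ p).symm]
      exact end_ge hN hmem p
    · rw [gam_of_notD hD', ← h1]
      exact hr.post

lemma intact_data (hN : 0 < N) (hmem : ∀ p, i0 ∈ blockSet γ p) (t : ℕ) (p : ZMod N)
    (hD : ¬ Dnear γ t p) :
    blockStart (gam γ i0 t) p = blockStart γ p ∧ blockEnd (gam γ i0 t) p = blockEnd γ p ∧
      blockSet (gam γ i0 t) p = blockSet γ p := by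
  obtain ⟨hr, hpq, hsl⟩ := self_run hN γ p
  have hir := intact_run hN hmem t p hD
  have h0 := local_block hN hir (blockStartIdx γ p) hsl
  rw [← hpq] at h0
  obtain ⟨h1, h2, h3, h4⟩ := h0
  refine ⟨h1, by rw [h2, ← blockEnd_eq hN], ?_⟩
  rw [blockSet, blockSet, h4, blockList_norm]
  congr 1
  rw [nlist, nlist]
  refine List.map_congr_left ?_
  intro u hu
  simp only [List.mem_range] at hu
  exact intact_agree (i0 := i0) hN t p hD u hu

lemma mem_i0_gam (hN : 0 < N) (hmem : ∀ p, i0 ∈ blockSet γ p) (t : ℕ) (r : ZMod N) :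
    i0 ∈ blockSet (gam γ i0 t) r := by
  by_cases hD : Dnear γ t r
  · rw [(wiped_data hN hmem t r hD).2.2]
    exact Finset.mem_singleton_self i0
  · rw [(intact_data hN hmem t r hD).2.2]
    exact hmem r

/-! hlex computation helper -/

lemma singleton_of_card_one {S : Finset (Fin n)} {i0 : Fin n} (h : S.card = 1)
    (hm : i0 ∈ S) : S = {i0} := by
  obtain ⟨a, ha⟩ := Finset.card_eq_one.mp h
  subst ha
  rw [Finset.mem_singleton] at hm
  rw [hm]

lemma hlexLEb_i0_left {i0 : Fin n} {T : Finset (Fin n)} (h : i0 ∈ T) :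
    hlexLEb ({i0} : Finset (Fin n)) T = true := by
  have h1 : 1 ≤ T.card := Finset.card_pos.mpr ⟨i0, h⟩
  rcases Nat.eq_or_lt_of_le h1 with h2 | h2
  · have : T = {i0} := singleton_of_card_one h2.symm h
    subst this
    simp [hlexLEb]
  · have hc : ({i0} : Finset (Fin n)).card < T.card := by
      rw [Finset.card_singleton]; omega
    simp only [hlexLEb, hlexLTb, Bool.or_eq_true, decide_eq_true_eq]
    exact Or.inl (Or.inl hc)

lemma hlexLEb_i0_right {i0 : Fin n} {T : Finset (Fin n)} (h : 2 ≤ T.card) :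
    hlexLEb T ({i0} : Finset (Fin n)) = false := by
  have hne : T ≠ {i0} := by
    intro hc
    rw [hc, Finset.card_singleton] at h
    omega
  have hlt : hlexLTb T ({i0} : Finset (Fin n)) = false := by
    unfold hlexLTb
    rw [Bool.or_eq_false_iff, Bool.and_eq_false_iff]
    constructor
    · rw [decide_eq_false_iff_not, Finset.card_singleton]
      omega
    · left
      rw [decide_eq_false_iff_not, Finset.card_singleton]
      omega
  unfold hlexLEb
  rw [Bool.or_eq_false_iff]
  exact ⟨hlt, decide_eq_false hne⟩

lemma hlex_helper (i0 : Fin n) (S1 S2 S3 : Finset (Fin n)) (w : Fin n)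
    (h1 : i0 ∈ S1) (h2 : i0 ∈ S2) (h3 : i0 ∈ S3)
    (hcard : S1.card = 1 ∨ S2.card = 1 ∨ S3.card = 1) :
    (sortedList (if hlexLEb (if hlexLEb S1 S2 then S1 else S2) S3
        then (if hlexLEb S1 S2 then S1 else S2) else S3)).headD w = i0 := by
  have hs : sortedList ({i0} : Finset (Fin n)) = [i0] := Finset.sort_singleton _ i0
  have hc1 : 1 ≤ S1.card := Finset.card_pos.mpr ⟨i0, h1⟩
  have hc2 : 1 ≤ S2.card := Finset.card_pos.mpr ⟨i0, h2⟩
  have hc3 : 1 ≤ S3.card := Finset.card_pos.mpr ⟨i0, h3⟩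
  have key : (if hlexLEb (if hlexLEb S1 S2 then S1 else S2) S3
      then (if hlexLEb S1 S2 then S1 else S2) else S3) = ({i0} : Finset (Fin n)) := by
    by_cases e1 : S1.card = 1
    · have hS1 : S1 = {i0} := singleton_of_card_one e1 h1
      subst hS1
      rw [if_pos (hlexLEb_i0_left h2), if_pos (hlexLEb_i0_left h3)]
    · by_cases e2 : S2.card = 1
      · have hS2 : S2 = {i0} := singleton_of_card_one e2 h2
        subst hS2
        have hinner : (if hlexLEb S1 ({i0} : Finset (Fin n)) = true then S1
            else ({i0} : Finset (Fin n))) = ({i0} : Finset (Fin n)) := by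
          rw [hlexLEb_i0_right (show 2 ≤ S1.card by omega)]
          simp
        rw [hinner, if_pos (hlexLEb_i0_left h3)]
      · have e3 : S3.card = 1 := by tauto
        have hS3 : S3 = {i0} := singleton_of_card_one e3 h3
        subst hS3
        have hm12 : 2 ≤ (if hlexLEb S1 S2 = true then S1 else S2).card := by
          split_ifs <;> omega
        rw [if_neg (show ¬ (hlexLEb (if hlexLEb S1 S2 = true then S1 else S2)
            ({i0} : Finset (Fin n)) = true) by
          rw [hlexLEb_i0_right hm12]; exact Bool.false_ne_true)]
  rw [key, hs]
  rfl

/-! the step lemma -/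

lemma step_lemma (hN : 0 < N) {γ : Config n N} {i0 : Fin n}
    (hmem : ∀ p, i0 ∈ blockSet γ p) (t : ℕ) :
    Prule (gam γ i0 t) = gam γ i0 (t+1) := by
  funext p
  by_cases hDp : Dnear γ t p
  · -- wiped site: stays i0
    obtain ⟨hb1, hb2, hb3⟩ := wiped_data hN hmem t p hDp
    have hcond : (blockSet (gam γ i0 t) p).card = 1 := by
      rw [hb3, Finset.card_singleton]
    rw [Prule]
    simp only [hb1, hb2]
    rw [if_pos (Or.inr (Or.inl hcond))]
    rw [gam_of_D (Dnear_mono γ (Nat.le_succ t) hDp), hb3]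
    exact hlex_helper i0 _ _ _ _ (mem_i0_gam hN hmem t (p-1)) (Finset.mem_singleton_self i0)
      (mem_i0_gam hN hmem t (p+1)) (Or.inr (Or.inl (by rw [Finset.card_singleton])))
  · obtain ⟨hb1, hb2, hb3⟩ := intact_data hN hmem t p hDp
    by_cases hDp1 : Dnear γ (t+1) p
    · -- p gets wiped this step
      have hrec := (Dnear_succ hN γ t p).mp hDp1
      have hlen : blockLen γ p ≠ 1 := by
        intro hc
        exact hDp (Dnear_mono γ (by omega) ((Dnear_zero γ p).mpr hc))
      have hcase : Dnear γ t (nb γ p) ∨ Dnear γ t (pb γ p) := by tauto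
      rw [Prule]
      simp only [hb1, hb2]
      have hS1mem : i0 ∈ blockSet (gam γ i0 t) (blockStart γ p - 1) := mem_i0_gam hN hmem t _
      have hS2mem : i0 ∈ blockSet (gam γ i0 t) p := mem_i0_gam hN hmem t _
      have hS3mem : i0 ∈ blockSet (gam γ i0 t) (blockEnd γ p + 1) := mem_i0_gam hN hmem t _
      have hcard : (blockSet (gam γ i0 t) (blockStart γ p - 1)).card = 1 ∨
          (blockSet (gam γ i0 t) p).card = 1 ∨
          (blockSet (gam γ i0 t) (blockEnd γ p + 1)).card = 1 := by
        rcases hcase with hc | hc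
        · right; right
          have : blockEnd γ p + 1 = nb γ p := rfl
          rw [this, (wiped_data hN hmem t _ hc).2.2, Finset.card_singleton]
        · left
          have : blockStart γ p - 1 = pb γ p := rfl
          rw [this, (wiped_data hN hmem t _ hc).2.2, Finset.card_singleton]
      rw [if_pos hcard, gam_of_D hDp1]
      exact hlex_helper i0 _ _ _ _ hS1mem hS2mem hS3mem hcard
    · -- p untouched
      have hrec := (Dnear_succ hN γ t p).not.mp hDp1
      push_neg at hrec
      obtain ⟨hlen, hnb, hpb⟩ := hrec
      rw [Prule]
      simp only [hb1, hb2]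
      have hcond : ¬ ((blockSet (gam γ i0 t) (blockStart γ p - 1)).card = 1 ∨
          (blockSet (gam γ i0 t) p).card = 1 ∨
          (blockSet (gam γ i0 t) (blockEnd γ p + 1)).card = 1) := by
        push_neg
        refine ⟨?_, ?_, ?_⟩
        · have : blockStart γ p - 1 = pb γ p := rfl
          rw [this, (intact_data hN hmem t _ hpb).2.2, blockSet_card hN]
          intro hc
          exact hpb (Dnear_mono γ (by omega) ((Dnear_zero γ _).mpr hc))
        · rw [hb3, blockSet_card hN]
          exact hlen
        · have : blockEnd γ p + 1 = nb γ p := rfl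
          rw [this, (intact_data hN hmem t _ hnb).2.2, blockSet_card hN]
          intro hc
          exact hnb (Dnear_mono γ (by omega) ((Dnear_zero γ _).mpr hc))
      rw [if_neg hcond, gam_of_notD hDp, gam_of_notD hDp1]

lemma blockLen_pos (γ : Config n N) (p : ZMod N) : 1 ≤ blockLen γ p := by
  unfold blockLen; omega

lemma blockSet_of_len_one (hN : 0 < N) {γ : Config n N} {p : ZMod N}
    (h : blockLen γ p = 1) : blockSet γ p = {γ p} ∧ blockStart γ p = p := by
  obtain ⟨u, hu, hpu⟩ := self_in_block hN γ p
  have hu0 : u = 0 := by omega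
  subst hu0
  have hbs : blockStart γ p = p := by
    have h0 : (((0:ℕ)) : ZMod N) = 0 := by push_cast; rfl
    rw [h0, add_zero] at hpu
    exact hpu.symm
  constructor
  · rw [blockSet, blockList_norm, h, nlist]
    simp [List.range_succ, hbs]
  · exact hbs

lemma gam_zero (hval : ∀ p, blockLen γ p = 1 → γ p = i0) : gam γ i0 0 = γ := by
  funext p
  by_cases hD : Dnear γ 0 p
  · rw [gam_of_D hD, hval p ((Dnear_zero γ p).mp hD)]
  · exact gam_of_notD hD

lemma iterate_gam (hN : 0 < N) (hmem : ∀ p, i0 ∈ blockSet γ p)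
    (hval : ∀ p, blockLen γ p = 1 → γ p = i0) (t : ℕ) :
    (Prule (n := n) (N := N))^[t] γ = gam γ i0 t := by
  induction t with
  | zero => simpa using (gam_zero hval).symm
  | succ m ih =>
    rw [Function.iterate_succ_apply', ih]
    exact step_lemma hN hmem m

/-! distance bound -/

lemma bs_nb (hN : 0 < N) (γ : Config n N) (x : ZMod N) :
    blockStart γ (nb γ x) = blockStart γ x + ((blockLen γ x : ℕ) : ZMod N) := by
  rw [blockStart_nb hN, nb, blockEnd_eq hN]
  have h2 : blockLen γ x - 1 + 1 = blockLen γ x := by have := blockLen_pos γ x; omega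
  calc blockStart γ x + ((blockLen γ x - 1 : ℕ) : ZMod N) + 1
      = blockStart γ x + ((blockLen γ x - 1 + 1 : ℕ) : ZMod N) := by push_cast; ring
    _ = blockStart γ x + ((blockLen γ x : ℕ) : ZMod N) := by rw [h2]

lemma bs_pb (hN : 0 < N) (γ : Config n N) (x : ZMod N) :
    blockStart γ (pb γ x) = blockStart γ x - ((blockLen γ (pb γ x) : ℕ) : ZMod N) := by
  have h1 : blockEnd γ (pb γ x) = pb γ x := blockEnd_pb hN γ x
  have h2 := blockEnd_eq hN γ (pb γ x)
  rw [h1] at h2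
  have h3 : blockStart γ (pb γ x) = pb γ x - ((blockLen γ (pb γ x) - 1 : ℕ) : ZMod N) := by
    linear_combination -h2
  rw [h3, pb]
  have h4 : blockLen γ (pb γ x) - 1 + 1 = blockLen γ (pb γ x) := by
    have := blockLen_pos γ (pb γ x); omega
  calc blockStart γ x - 1 - ((blockLen γ (pb γ x) - 1 : ℕ) : ZMod N)
      = blockStart γ x - (((blockLen γ (pb γ x) - 1 + 1 : ℕ) : ℕ) : ZMod N) := by push_cast; ring
    _ = blockStart γ x - ((blockLen γ (pb γ x) : ℕ) : ZMod N) := by rw [h4]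

lemma nb_iter_start (hN : 0 < N) (γ : Config n N) (p : ZMod N) :
    ∀ a, blockStart γ ((nb γ)^[a] p) =
      blockStart γ p + ((∑ b ∈ Finset.range a, blockLen γ ((nb γ)^[b] p) : ℕ) : ZMod N) := by
  intro a
  induction a with
  | zero => simp
  | succ m ih =>
    rw [Function.iterate_succ_apply', bs_nb hN, ih, Finset.sum_range_succ]
    push_cast
    ring

lemma pb_iter_start (hN : 0 < N) (γ : Config n N) (p : ZMod N) :
    ∀ a, blockStart γ ((pb γ)^[a] p) =
      blockStart γ p - ((∑ b ∈ Finset.range a, blockLen γ ((pb γ)^[b+1] p) : ℕ) : ZMod N) := by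
  intro a
  induction a with
  | zero => simp
  | succ m ih =>
    rw [Function.iterate_succ_apply', bs_pb hN, ih, Finset.sum_range_succ]
    rw [show pb γ ((pb γ)^[m] p) = (pb γ)^[m+1] p from (Function.iterate_succ_apply' _ _ _).symm]
    push_cast
    ring

lemma sum_locate (f : ℕ → ℕ) :
    ∀ d x, x < ∑ b ∈ Finset.range d, f b →
      ∃ a, a < d ∧ ∑ b ∈ Finset.range a, f b ≤ x ∧ x < ∑ b ∈ Finset.range a, f b + f a := by
  intro d
  induction d with
  | zero => intro x hx; simp at hx
  | succ m ih =>
    intro x hx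
    rcases Nat.lt_or_ge x (∑ b ∈ Finset.range m, f b) with h | h
    · obtain ⟨a, ha, h1, h2⟩ := ih x h
      exact ⟨a, by omega, h1, h2⟩
    · refine ⟨m, by omega, h, ?_⟩
      rw [Finset.sum_range_succ] at hx
      omega

lemma fwd_cover (hN : 0 < N) (γ : Config n N) (p : ZMod N) (d x : ℕ)
    (hx : x < ∑ b ∈ Finset.range d, blockLen γ ((nb γ)^[b] p)) :
    ∃ a, a < d ∧
      blockLen γ (blockStart γ p + (x : ZMod N)) = blockLen γ ((nb γ)^[a] p) := by
  obtain ⟨a, ha, h1, h2⟩ := sum_locate _ d x hx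
  set F := ∑ b ∈ Finset.range a, blockLen γ ((nb γ)^[b] p) with hF
  have hsite : blockStart γ p + (x : ZMod N)
      = blockStart γ ((nb γ)^[a] p) + ((x - F : ℕ) : ZMod N) := by
    rw [nb_iter_start hN γ p a, ← hF]
    rw [show ((x : ℕ) : ZMod N) = ((F : ℕ) : ZMod N) + ((x - F : ℕ) : ZMod N) by
      rw [← Nat.cast_add]; congr 1; omega]
    ring
  have := (block_inv hN γ ((nb γ)^[a] p) (x - F) (by omega)).2.1
  rw [← hsite] at this
  exact ⟨a, ha, this⟩

lemma bwd_cover (hN : 0 < N) (γ : Config n N) (p : ZMod N) (d y : ℕ) (hy1 : 1 ≤ y)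
    (hy2 : y ≤ ∑ b ∈ Finset.range d, blockLen γ ((pb γ)^[b+1] p)) :
    ∃ a, a < d ∧
      blockLen γ (blockStart γ p - (y : ZMod N)) = blockLen γ ((pb γ)^[a+1] p) := by
  obtain ⟨a, ha, h1, h2⟩ := sum_locate (fun b => blockLen γ ((pb γ)^[b+1] p)) d (y-1)
    (by show y - 1 < ∑ b ∈ Finset.range d, blockLen γ ((pb γ)^[b+1] p); omega)
  set G := ∑ b ∈ Finset.range a, blockLen γ ((pb γ)^[b+1] p) with hG
  set L := blockLen γ ((pb γ)^[a+1] p) with hL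
  have hu : G + L - y < L := by omega
  have hsite : blockStart γ p - (y : ZMod N)
      = blockStart γ ((pb γ)^[a+1] p) + ((G + L - y : ℕ) : ZMod N) := by
    rw [pb_iter_start hN γ p (a+1), Finset.sum_range_succ, ← hG, ← hL]
    rw [show ((G + L : ℕ) : ZMod N) = ((G + L - y : ℕ) : ZMod N) + ((y : ℕ) : ZMod N) by
      rw [← Nat.cast_add]; congr 1; omega]
    ring
  have := (block_inv hN γ ((pb γ)^[a+1] p) (G + L - y) hu).2.1
  rw [← hsite] at this
  exact ⟨a, ha, this⟩

lemma ex_sing (hN : 0 < N) (γ : Config n N) (hsing : ∃ z, blockLen γ z = 1) (p : ZMod N) :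
    ∃ a, blockLen γ ((nb γ)^[a] p) = 1 ∨ blockLen γ ((pb γ)^[a] p) = 1 := by
  haveI : NeZero N := ⟨by omega⟩
  obtain ⟨z, hz⟩ := hsing
  set x := (z - blockStart γ p).val with hx
  have hxN : x < N := ZMod.val_lt _
  have hsum : (N : ℕ) ≤ ∑ b ∈ Finset.range N, blockLen γ ((nb γ)^[b] p) := by
    calc (N : ℕ) = ∑ _b ∈ Finset.range N, 1 := by simp
      _ ≤ _ := Finset.sum_le_sum (fun i _ => blockLen_pos γ _)
  obtain ⟨a, ha, hlen⟩ := fwd_cover hN γ p N x (by omega)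
  have hsite : blockStart γ p + (x : ZMod N) = z := by
    rw [hx, ZMod.natCast_val, ZMod.cast_id]
    ring
  rw [hsite, hz] at hlen
  exact ⟨a, Or.inl hlen.symm⟩

lemma Dnear_all (hN : 0 < N) (γ : Config n N) (hsing : ∃ z, blockLen γ z = 1)
    (K : ℕ) (hK : N ≤ 4*K + 1) (p : ZMod N) : Dnear γ K p := by
  haveI : NeZero N := ⟨by omega⟩
  have hex := ex_sing hN γ hsing p
  set d := Nat.find hex with hd
  have hspec := Nat.find_spec hex
  rcases Nat.lt_or_ge K d with hKd | hKd
  swap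
  · exact ⟨d, hKd, hspec⟩
  -- contradiction case
  exfalso
  have hmin : ∀ a, a < d → 2 ≤ blockLen γ ((nb γ)^[a] p) ∧ 2 ≤ blockLen γ ((pb γ)^[a] p) := by
    intro a ha
    have h1 := Nat.find_min hex ha
    push_neg at h1
    have h2 := blockLen_pos γ ((nb γ)^[a] p)
    have h3 := blockLen_pos γ ((pb γ)^[a] p)
    omega
  set Tf := ∑ b ∈ Finset.range d, blockLen γ ((nb γ)^[b] p) with hTf
  set Tb := ∑ b ∈ Finset.range (d-1), blockLen γ ((pb γ)^[b+1] p) with hTb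
  have hTf2 : 2*d ≤ Tf := by
    calc 2*d = ∑ _b ∈ Finset.range d, 2 := by simp [Nat.mul_comm]
      _ ≤ Tf := Finset.sum_le_sum (fun i hi => (hmin i (Finset.mem_range.mp hi)).1)
  have hTb2 : 2*(d-1) ≤ Tb := by
    calc 2*(d-1) = ∑ _b ∈ Finset.range (d-1), 2 := by simp [Nat.mul_comm]
      _ ≤ Tb := Finset.sum_le_sum (fun i hi => by
          have hi' := Finset.mem_range.mp hi
          have := (hmin (i+1) (by omega)).2
          exact this)
  obtain ⟨z, hz⟩ := hsing
  set w := (z - (blockStart γ p - (Tb : ZMod N))).val with hw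
  have hwN : w < N := ZMod.val_lt _
  have hzsite : z = blockStart γ p - (Tb : ZMod N) + (w : ZMod N) := by
    rw [hw, ZMod.natCast_val, ZMod.cast_id]
    ring
  rcases Nat.lt_or_ge w Tb with hcase | hcase
  · -- backward
    obtain ⟨a, ha, hlen⟩ := bwd_cover hN γ p (d-1) (Tb - w) (by omega) (by omega)
    have hsite2 : blockStart γ p - ((Tb - w : ℕ) : ZMod N) = z := by
      rw [hzsite]
      rw [show ((Tb - w : ℕ) : ZMod N) = ((Tb : ℕ) : ZMod N) - ((w : ℕ) : ZMod N) by
        rw [eq_sub_iff_add_eq, ← Nat.cast_add]; congr 1; omega]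
      ring
    rw [hsite2, hz] at hlen
    have := (hmin (a+1) (by omega)).2
    omega
  · -- forward
    have hxTf : w - Tb < Tf := by omega
    obtain ⟨a, ha, hlen⟩ := fwd_cover hN γ p d (w - Tb) hxTf
    have hsite2 : blockStart γ p + ((w - Tb : ℕ) : ZMod N) = z := by
      rw [hzsite]
      rw [show ((w - Tb : ℕ) : ZMod N) = ((w : ℕ) : ZMod N) - ((Tb : ℕ) : ZMod N) by
        rw [eq_sub_iff_add_eq, ← Nat.cast_add]; congr 1; omega]
      ring
    rw [hsite2, hz] at hlen
    have := (hmin a ha).1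
    omega

end CaseA

/-! counting -/

section Count

variable [NeZero N] {γ : Config n N}

lemma coe_range_eq (M : ℕ) :
    ((List.range M).flatMap fun a => [((a:ℕ) : ZMod N)])
      = (List.range M).map (fun a : ℕ => ((a:ℕ) : ZMod N)) := by
  induction (List.range M) with
  | nil => rfl
  | cons a l ih => simp_all

lemma countState_eq (γ : Config n N) (x : Fin n) :
    countState x γ = (Finset.univ.filter (fun p : ZMod N => γ p = x)).card := by
  have h1 : countState x γ = ((Finset.range N).filter (fun j => γ ((j:ℕ) : ZMod N) = x)).card := by
    have h2 : (Finset.range N).val = ((List.range N : List ℕ) : Multiset ℕ) := rfl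
    rw [Finset.card_def, Finset.filter_val, h2, Multiset.filter_coe, Multiset.coe_card]
    show (List.filter _ ((List.range N).flatMap fun a => [((a:ℕ) : ZMod N)])).length = _
    rw [coe_range_eq, List.filter_map, List.length_map]
    rfl
  rw [h1]
  apply Finset.card_bij (fun j _ => ((j : ℕ) : ZMod N))
  · intro j hj
    simp only [Finset.mem_filter, Finset.mem_range] at hj
    simp only [Finset.mem_filter, Finset.mem_univ, true_and]
    exact hj.2
  · intro j hj j' hj' he
    simp only [Finset.mem_filter, Finset.mem_range] at hj hj'
    have := congrArg ZMod.val he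
    rwa [ZMod.val_cast_of_lt hj.1, ZMod.val_cast_of_lt hj'.1] at this
  · intro p hp
    simp only [Finset.mem_filter, Finset.mem_univ, true_and] at hp
    refine ⟨p.val, ?_, ?_⟩
    · simp only [Finset.mem_filter, Finset.mem_range]
      constructor
      · exact ZMod.val_lt p
      · rwa [ZMod.natCast_val, ZMod.cast_id]
    · rw [ZMod.natCast_val, ZMod.cast_id]

lemma blockList_length (hN : 0 < N) (γ : Config n N) (p : ZMod N) :
    (blockList γ p).length = blockLen γ p := by
  rw [blockList_norm, nlist]
  simp

/-- the canonical site with value `a` in the block of `p` -/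
noncomputable def aSite (γ : Config n N) (a : Fin n) (p : ZMod N) : ZMod N :=
  blockStart γ p + (((blockList γ p).idxOf a : ℕ) : ZMod N)

lemma aSite_spec (hN : 0 < N) (γ : Config n N) (a : Fin n) (p : ZMod N)
    (ha : a ∈ blockSet γ p) :
    γ (aSite γ a p) = a ∧ (blockList γ p).idxOf a < blockLen γ p ∧
      blockStart γ (aSite γ a p) = blockStart γ p := by
  have hml : a ∈ blockList γ p := by rwa [blockSet, List.mem_toFinset] at ha
  have hidx : (blockList γ p).idxOf a < blockLen γ p := by
    have := List.idxOf_lt_length_iff.mpr hml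
    rwa [blockList_length hN] at this
  have hget : (blockList γ p).get ⟨(blockList γ p).idxOf a,
      by rwa [blockList_length hN]⟩ = a :=
    List.idxOf_get _
  have hcongr : ∀ (l1 l2 : List (Fin n)) (h : l1 = l2) (i : ℕ) (hi : i < l1.length),
      l1.get ⟨i, hi⟩ = l2.get ⟨i, h ▸ hi⟩ := by
    intro l1 l2 h i hi
    subst h
    rfl
  have h5 : γ (blockStart γ p + ((List.idxOf a (blockList γ p) : ℕ) : ZMod N))
      = (blockList γ p).get ⟨List.idxOf a (blockList γ p), by rwa [blockList_length hN]⟩ := by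
    rw [hcongr _ _ (blockList_norm γ p) _ _]
    simp [nlist]
  have hval : γ (aSite γ a p) = a := by
    rw [aSite]
    exact h5.trans hget
  exact ⟨hval, hidx, (block_inv hN γ p _ hidx).1⟩

lemma count_le (hN : 0 < N) (γ : Config n N) (a : Fin n)
    (ha : ∀ p, a ∈ blockSet γ p) (x : Fin n) :
    countState x γ ≤ countState a γ := by
  rw [countState_eq, countState_eq]
  apply Finset.card_le_card_of_injOn (aSite γ a)
  · intro p hp
    simp only [Finset.mem_coe, Finset.mem_filter, Finset.mem_univ, true_and]
    exact (aSite_spec hN γ a p (ha p)).1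
  · intro p hp p' hp' he
    simp only [Finset.coe_filter, Set.mem_setOf_eq, Finset.mem_univ, true_and] at hp hp'
    have h1 := (aSite_spec hN γ a p (ha p)).2.2
    have h2 := (aSite_spec hN γ a p' (ha p')).2.2
    have hbs : blockStart γ p = blockStart γ p' := by
      rw [← h1, ← h2, he]
    obtain ⟨s, hs, hps⟩ := self_in_block hN γ p
    obtain ⟨s', hs', hps'⟩ := self_in_block hN γ p'
    have hlen : blockLen γ p = blockLen γ p' := by
      have e1 := (inv_start hN γ p).2
      have e2 := (inv_start hN γ p').2
      rw [← e1, ← e2, hbs]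
    obtain ⟨hr, _, _⟩ := self_run hN γ p
    have hss : s = s' := by
      by_contra hne
      rcases Nat.lt_or_ge s s' with hlt | hge
      · have := run_strict_mono hr hlt (by omega)
        rw [← hps] at this
        rw [show blockStart γ p + ((s' : ℕ) : ZMod N) = p' by rw [hbs, ← hps']] at this
        rw [hp, hp'] at this
        exact lt_irrefl _ this
      · have hlt : s' < s := by omega
        have := run_strict_mono hr hlt hs
        rw [← hps] at this
        rw [show blockStart γ p + ((s' : ℕ) : ZMod N) = p' by rw [hbs, ← hps']] at this
        rw [hp, hp'] at this
        exact lt_irrefl _ this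
    rw [hps, hps', hss, hbs]

lemma count_lt (hN : 0 < N) (γ : Config n N) (a : Fin n)
    (ha : ∀ p, a ∈ blockSet γ p) (z : ZMod N) (hz1 : blockLen γ z = 1) (hza : γ z = a)
    (x : Fin n) (hxa : x ≠ a) :
    countState x γ < countState a γ := by
  rw [countState_eq, countState_eq]
  have hzmem : z ∈ Finset.univ.filter (fun p : ZMod N => γ p = a) := by
    simp [hza]
  have hle : (Finset.univ.filter (fun p : ZMod N => γ p = x)).card
      ≤ ((Finset.univ.filter (fun p : ZMod N => γ p = a)).erase z).card := by
    apply Finset.card_le_card_of_injOn (aSite γ a)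
    · intro p hp
      simp only [Finset.mem_coe, Finset.mem_filter, Finset.mem_univ, true_and] at hp ⊢
      rw [Finset.mem_erase]
      constructor
      · -- aSite γ a p ≠ z
        intro hc
        obtain ⟨hv, hidx, hbs⟩ := aSite_spec hN γ a p (ha p)
        have hzbs : blockStart γ z = z := (blockSet_of_len_one hN hz1).2
        have hbsz : blockStart γ p = z := by rw [← hbs, hc, hzbs]
        have hlenp : blockLen γ p = 1 := by
          have e1 := (inv_start hN γ p).2
          rw [hbsz] at e1
          omega
        obtain ⟨s, hs, hps⟩ := self_in_block hN γ p
        have hs0 : s = 0 := by omega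
        subst hs0
        have hpz : p = z := by
          rw [hps, hbsz]
          push_cast; ring
        rw [hpz, hza] at hp
        exact hxa hp.symm
      · simp only [Finset.mem_filter, Finset.mem_univ, true_and]
        exact (aSite_spec hN γ a p (ha p)).1
    · intro p hp p' hp' he
      simp only [Finset.coe_filter, Set.mem_setOf_eq, Finset.mem_univ, true_and] at hp hp'
      -- same injectivity argument
      have h1 := (aSite_spec hN γ a p (ha p)).2.2
      have h2 := (aSite_spec hN γ a p' (ha p')).2.2
      have hbs : blockStart γ p = blockStart γ p' := by
        rw [← h1, ← h2, he]
      obtain ⟨s, hs, hps⟩ := self_in_block hN γ p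
      obtain ⟨s', hs', hps'⟩ := self_in_block hN γ p'
      have hlen : blockLen γ p = blockLen γ p' := by
        have e1 := (inv_start hN γ p).2
        have e2 := (inv_start hN γ p').2
        rw [← e1, ← e2, hbs]
      obtain ⟨hr, _, _⟩ := self_run hN γ p
      have hss : s = s' := by
        by_contra hne
        rcases Nat.lt_or_ge s s' with hlt | hge
        · have := run_strict_mono hr hlt (by omega)
          rw [← hps] at this
          rw [show blockStart γ p + ((s' : ℕ) : ZMod N) = p' by rw [hbs, ← hps']] at this
          rw [hp, hp'] at this
          exact lt_irrefl _ this
        · have hlt : s' < s := by omega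
          have := run_strict_mono hr hlt hs
          rw [← hps] at this
          rw [show blockStart γ p + ((s' : ℕ) : ZMod N) = p' by rw [hbs, ← hps']] at this
          rw [hp, hp'] at this
          exact lt_irrefl _ this
      rw [hps, hps', hss, hbs]
  have hlt : ((Finset.univ.filter (fun p : ZMod N => γ p = a)).erase z).card
      < (Finset.univ.filter (fun p : ZMod N => γ p = a)).card :=
    Finset.card_erase_lt_of_mem hzmem
  omega

end Count

section Main

variable {γ : Config n N}

lemma self_mem_blockSet (hN : 0 < N) (γ : Config n N) (p : ZMod N) :
    γ p ∈ blockSet γ p := by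
  obtain ⟨u, hu, hpu⟩ := self_in_block hN γ p
  rw [mem_blockSet_iff hN]
  exact ⟨u, hu, by rw [← hpu]⟩

lemma blockSet_end (hN : 0 < N) (γ : Config n N) (p : ZMod N) :
    blockSet γ (blockEnd γ p) = blockSet γ p := by
  obtain ⟨he, hl⟩ := blockEnd_in_block hN γ p
  have h := (block_inv hN γ p _ hl).2.2.1
  rw [← he] at h
  rw [blockSet, blockSet, h]

lemma comp_of_elastic (hN : 0 < N)
    (helastic : ∀ d1 ∈ breakList γ, ∀ d2 ∈ breakList γ,
      blockSet γ (d1 : ZMod N) ⊆ blockSet γ (d2 : ZMod N) ∨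
      blockSet γ (d2 : ZMod N) ⊆ blockSet γ (d1 : ZMod N))
    (p p' : ZMod N) :
    blockSet γ p ⊆ blockSet γ p' ∨ blockSet γ p' ⊆ blockSet γ p := by
  haveI : NeZero N := ⟨by omega⟩
  have hmem : ∀ r : ZMod N, (blockEnd γ r).val ∈ breakList γ := by
    intro r
    rw [breakList, List.mem_filter]
    constructor
    · rw [List.mem_range]
      exact ZMod.val_lt _
    · rw [decide_eq_true_eq]
      have hcast : (((blockEnd γ r).val : ℕ) : ZMod N) = blockEnd γ r := by
        rw [ZMod.natCast_val, ZMod.cast_id]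
      rw [hcast]
      exact isBreak_blockEnd hN γ r
  have hcast : ∀ r : ZMod N, (((blockEnd γ r).val : ℕ) : ZMod N) = blockEnd γ r := by
    intro r
    rw [ZMod.natCast_val, ZMod.cast_id]
  have h := helastic _ (hmem p) _ (hmem p')
  rw [hcast, hcast, blockSet_end hN, blockSet_end hN] at h
  exact h

/-- Case A: a singleton block exists -/
lemma caseA_const (hN : 0 < N)
    (hcomp : ∀ p p', blockSet γ p ⊆ blockSet γ p' ∨ blockSet γ p' ⊆ blockSet γ p)
    (z : ZMod N) (hz : blockLen γ z = 1) (K : ℕ) (hK : N ≤ 4*K + 1) :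
    (Prule (n := n) (N := N))^[K] γ = constConfig n N (γ z) ∧
      InOmega (γ z) γ ∧ (∀ i : Fin n, i ≠ γ z → ¬ InOmega i γ) := by
  haveI : NeZero N := ⟨by omega⟩
  set i0 := γ z with hi0
  have hzset : blockSet γ z = {i0} := (blockSet_of_len_one hN hz).1
  have hmem : ∀ p, i0 ∈ blockSet γ p := by
    intro p
    rcases hcomp p z with h | h
    · rw [hzset] at h
      have := h (self_mem_blockSet hN γ p)
      rw [Finset.mem_singleton] at this
      rw [← this]
      exact self_mem_blockSet hN γ p
    · rw [hzset] at h
      exact h (Finset.mem_singleton_self i0)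
  have hval : ∀ p, blockLen γ p = 1 → γ p = i0 := by
    intro p hp
    have := hmem p
    rw [(blockSet_of_len_one hN hp).1, Finset.mem_singleton] at this
    exact this.symm
  have hsing : ∃ z', blockLen γ z' = 1 := ⟨z, hz⟩
  refine ⟨?_, ?_, ?_⟩
  · rw [iterate_gam hN hmem hval K]
    funext p
    rw [constConfig]
    exact gam_of_D (Dnear_all hN γ hsing K hK p)
  · intro j hj
    exact count_lt hN γ i0 hmem z hz rfl j hj
  · intro i hi hio
    have h1 := hio i0 (Ne.symm hi)
    have h2 := count_le hN γ i0 hmem i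
    omega

lemma caseB_fix (hN : 0 < N) (hns : ∀ p : ZMod N, blockLen γ p ≠ 1) :
    Prule γ = γ := by
  funext p
  rw [Prule]
  rw [if_neg]
  push_neg
  refine ⟨?_, ?_, ?_⟩ <;> rw [blockSet_card hN] <;> exact hns _

lemma const_len (hN : 0 < N) (i : Fin n) (p : ZMod N) :
    blockLen (constConfig n N i) p = 1 := by
  have hr : RunData (constConfig n N i) p 1 :=
    ⟨le_rfl, hN, fun t ht => by omega, le_refl _, le_refl _⟩
  have := (local_block hN hr 0 (by omega)).2.2.1
  rwa [show p + ((0:ℕ) : ZMod N) = p by push_cast; ring] at this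

lemma exists_min_block (hN : 0 < N)
    (hcomp : ∀ p p', blockSet γ p ⊆ blockSet γ p' ∨ blockSet γ p' ⊆ blockSet γ p) :
    ∃ p0 : ZMod N, ∀ p, blockSet γ p0 ⊆ blockSet γ p := by
  haveI : NeZero N := ⟨by omega⟩
  set F := Finset.univ.image (fun p : ZMod N => blockSet γ p) with hF
  have hne : F.Nonempty := ⟨blockSet γ 0, by simp [hF]⟩
  obtain ⟨m, hmF, hmin⟩ := Finset.exists_minimal hne
  rw [hF, Finset.mem_image] at hmF
  obtain ⟨p0, _, hp0⟩ := hmF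
  refine ⟨p0, fun p => ?_⟩
  rcases hcomp p0 p with h | h
  · exact h
  · have hmemF : blockSet γ p ∈ F := by
      rw [hF, Finset.mem_image]
      exact ⟨p, Finset.mem_univ p, rfl⟩
    have hthis := hmin hmemF
    rw [hp0] at h ⊢
    by_cases he : blockSet γ p = m
    · rw [he]
    · exact hthis h

theorem main_scratch (hn : 2 ≤ n) (hN : 1 ≤ N) (γ : Config n N)
    (helastic : ∀ d1 ∈ breakList γ, ∀ d2 ∈ breakList γ,
      blockSet γ (d1 : ZMod N) ⊆ blockSet γ (d2 : ZMod N) ∨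
      blockSet γ (d2 : ZMod N) ⊆ blockSet γ (d1 : ZMod N))
    (i : Fin n) :
    (Prule (n := n) (N := N))^[(((N - 1) + 1) / 2 + 1) / 2] γ = constConfig n N i ↔
      InOmega i γ := by
  have hN0 : 0 < N := hN
  haveI : NeZero N := ⟨by omega⟩
  set K := (((N - 1) + 1) / 2 + 1) / 2 with hKdef
  have hK : N ≤ 4*K + 1 := by rw [hKdef]; omega
  have hcomp := comp_of_elastic hN0 helastic
  by_cases hsing : ∃ z, blockLen γ z = 1
  · obtain ⟨z, hz⟩ := hsing
    obtain ⟨hconst, hio, hnio⟩ := caseA_const hN0 hcomp z hz K hK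
    constructor
    · intro h
      have he : constConfig n N (γ z) = constConfig n N i := hconst.symm.trans h
      have : γ z = i := congrFun he (0 : ZMod N)
      rw [← this]
      exact hio
    · intro h
      by_cases hi : i = γ z
      · rw [hi] at h ⊢
        exact hconst
      · exact absurd h (hnio i hi)
  · push_neg at hsing
    have hfix : (Prule (n := n) (N := N))^[K] γ = γ :=
      Function.iterate_fixed (caseB_fix hN0 hsing) K
    rw [hfix]
    constructor
    · intro h
      exfalso
      have := const_len hN0 i (0 : ZMod N)
      rw [← h] at this
      exact hsing 0 this
    · intro h
      exfalso
      obtain ⟨p0, hp0⟩ := exists_min_block hN0 hcomp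
      have hcard : 2 ≤ (blockSet γ p0).card := by
        rw [blockSet_card hN0]
        have h1 := blockLen_pos γ p0
        have h2 := hsing p0
        omega
      obtain ⟨a, ha, b, hb, hab⟩ := Finset.one_lt_card.mp hcard
      have hamem : ∀ p, a ∈ blockSet γ p := fun p => hp0 p (by exact ha)
      have hbmem : ∀ p, b ∈ blockSet γ p := fun p => hp0 p (by exact hb)
      by_cases hia : i = a
      · have hbi : b ≠ i := by rw [hia]; exact fun hc => hab hc.symm
        have h1 := h b hbi
        have h2 := count_le hN0 γ b hbmem i
        omega
      · have h1 := h a (fun hc => hia hc.symm)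
        have h2 := count_le hN0 γ a hamem i
        omega

end Main

end Scratch


/-- If the EBs of `α` interact only elastically, then applying the
propagation rule `P` exactly `⌈⌈(N−1)/2⌉/2⌉` times yields the constant configuration
`i^N` if and only if `α ∈ Ω_i`. -/
theorem propagation_classifies_elastic
    (n N : ℕ) (hn : 2 ≤ n) (hN : 1 ≤ N) (α : Config n N)
    (helastic : ∀ d1 ∈ breakList α, ∀ d2 ∈ breakList α,
      blockSet α (d1 : ZMod N) ⊆ blockSet α (d2 : ZMod N) ∨
      blockSet α (d2 : ZMod N) ⊆ blockSet α (d1 : ZMod N))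
    (i : Fin n) :
    (Prule (n := n) (N := N))^[(((N - 1) + 1) / 2 + 1) / 2] α = constConfig n N i ↔
      InOmega i α := by
  exact Scratch.main_scratch hn hN α helastic i

end DensityCA
end
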